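/- arXiv:1604.06614 — 6 statements merged into one kernel-verified Lean document; each statement's English description precedes it below -/
import Mathlib

section
/- If s is a separable scoring function, then the scoring rule R_s is agenda separable: for every constrained agenda (A,Γ), every independent partition {A1,A2} of A, and every profile P over A, R_s(P) = { J1 ∪ J2 : J1 ∈ R_s(P↓A1), J2 ∈ R_s(P↓A2) }. -/
/-!
Judgment aggregation framework.
Valuations form a nonempty finite type `V`; a formula is identified with its set of
models, i.e. a `Finset V`; negation is complement.
-/

namespace JA

variable {V : Type*} [Fintype V] [DecidableEq V]

/-- A set of formulas `J` is `Γ`-consistent if some model of `Γ` satisfies every formula of `J`. -/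
def Consistent (Γ : Finset V) (J : Finset (Finset V)) : Prop :=
  ∃ v ∈ Γ, ∀ φ ∈ J, v ∈ φ

/-- `A` is an agenda: it is closed under negation (complement) and contains no formula
with an empty or full set of models. -/
def IsAgenda (A : Finset (Finset V)) : Prop :=
  (∀ φ ∈ A, φᶜ ∈ A) ∧ ∀ φ ∈ A, φ.Nonempty ∧ φ ≠ Finset.univ

/-- The set `𝒥_A` of complete `Γ`-consistent judgment sets over the agenda `A`. -/
def CCJ (Γ : Finset V) (A : Finset (Finset V)) : Set (Finset (Finset V)) :=
  {J | J ⊆ A ∧ (∀ φ ∈ A, φ ∈ J ∨ φᶜ ∈ J) ∧ Consistent Γ J}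

/-- A profile is an `n`-tuple of complete `Γ`-consistent judgment sets. -/
def IsProfile (Γ : Finset V) (A : Finset (Finset V)) {n : ℕ}
    (P : Fin n → Finset (Finset V)) : Prop :=
  ∀ i, P i ∈ CCJ Γ A

/-- Restriction `P↓B` of a profile `P` to a sub-agenda `B`. -/
def restrict {n : ℕ} (P : Fin n → Finset (Finset V)) (B : Finset (Finset V)) :
    Fin n → Finset (Finset V) :=
  fun i => P i ∩ B

/-- `{A1, A2}` is an independent partition of `A`. -/
def IndepPartition (Γ : Finset V) (A A1 A2 : Finset (Finset V)) : Prop :=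
  A1 ∪ A2 = A ∧ Disjoint A1 A2 ∧ IsAgenda A1 ∧ IsAgenda A2 ∧
    ∀ J1 ∈ CCJ Γ A1, ∀ J2 ∈ CCJ Γ A2, Consistent Γ (J1 ∪ J2)

/-- `{A1, A2}` is an independent overlapping decomposition (IOD) of `A`. -/
def IOD (Γ : Finset V) (A A1 A2 : Finset (Finset V)) : Prop :=
  A1 ∪ A2 = A ∧ IsAgenda A1 ∧ IsAgenda A2 ∧
    ∀ J1 ∈ CCJ Γ A1, ∀ J2 ∈ CCJ Γ A2, J1 ∩ A2 = J2 ∩ A1 → J1 ∪ J2 ∈ CCJ Γ A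

/-- The set `{ J1 ∪ J2 : J1 ∈ S1, J2 ∈ S2 }`. -/
def pairUnions (S1 S2 : Set (Finset (Finset V))) : Set (Finset (Finset V)) :=
  {J | ∃ J1 ∈ S1, ∃ J2 ∈ S2, J = J1 ∪ J2}

/-- `N(P,φ)`: the number of agents of the profile `P` accepting `φ`. -/
def Ncount {n : ℕ} (P : Fin n → Finset (Finset V)) (φ : Finset V) : ℕ :=
  (Finset.univ.filter fun i => φ ∈ P i).card

/-- The majoritarian set `m(P) = {φ ∈ A : N(P,φ) > n/2}`. -/
def maj {n : ℕ} (A : Finset (Finset V)) (P : Fin n → Finset (Finset V)) :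
    Finset (Finset V) :=
  A.filter fun φ => n < 2 * Ncount P φ

end JA

namespace JA

variable {V : Type*} [Fintype V] [DecidableEq V]

/-- Total score of a judgment set `J` for a profile `P` under the scoring function `s`. -/
noncomputable def totalScore (s : Finset (Finset V) → Finset V → ℝ) {n : ℕ}
    (P : Fin n → Finset (Finset V)) (J : Finset (Finset V)) : ℝ :=
  ∑ i, ∑ φ ∈ J, s (P i) φ

/-- The scoring rule `R_s`: it selects the complete `Γ`-consistent judgment sets
maximizing the total score. -/
def scoringRule (s : Finset (Finset V) → Finset V → ℝ) (Γ : Finset V)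
    (A : Finset (Finset V)) {n : ℕ} (P : Fin n → Finset (Finset V)) :
    Set (Finset (Finset V)) :=
  {J | J ∈ CCJ Γ A ∧ ∀ J' ∈ CCJ Γ A, totalScore s P J' ≤ totalScore s P J}

/-- The scoring function `s` is separable: on every independent partition `{A1, A2}` of an
agenda, the score of `φ ∈ Aᵢ` only depends on the restriction of the judgment set to `Aᵢ`. -/
def SeparableScoring (s : Finset (Finset V) → Finset V → ℝ) : Prop :=
  ∀ (Γ : Finset V) (A A1 A2 : Finset (Finset V)), Γ.Nonempty → IsAgenda A →
    IndepPartition Γ A A1 A2 → ∀ J ∈ CCJ Γ A,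
      (∀ φ ∈ A1, s J φ = s (J ∩ A1) φ) ∧ ∀ φ ∈ A2, s J φ = s (J ∩ A2) φ

lemma inter_mem_CCJ {Γ : Finset V} {A A1 : Finset (Finset V)}
    (hA1 : IsAgenda A1) (hsub : A1 ⊆ A) {J : Finset (Finset V)}
    (hJ : J ∈ CCJ Γ A) : J ∩ A1 ∈ CCJ Γ A1 := by
  obtain ⟨hJA, hc, v, hv, hm⟩ := hJ
  refine ⟨Finset.inter_subset_right, ?_, v, hv, ?_⟩
  · intro φ hφ
    rcases hc φ (hsub hφ) with h | h
    · exact Or.inl (Finset.mem_inter.mpr ⟨h, hφ⟩)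
    · exact Or.inr (Finset.mem_inter.mpr ⟨h, hA1.1 φ hφ⟩)
  · intro φ hφ; exact hm φ (Finset.mem_inter.mp hφ).1

lemma union_mem_CCJ {Γ : Finset V} {A A1 A2 : Finset (Finset V)}
    (hip : IndepPartition Γ A A1 A2) {J1 J2 : Finset (Finset V)}
    (h1 : J1 ∈ CCJ Γ A1) (h2 : J2 ∈ CCJ Γ A2) : J1 ∪ J2 ∈ CCJ Γ A := by
  obtain ⟨hAeq, hdisj, hag1, hag2, hcons⟩ := hip
  refine ⟨?_, ?_, hcons J1 h1 J2 h2⟩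
  · rw [← hAeq]; exact Finset.union_subset_union h1.1 h2.1
  · intro φ hφ
    rw [← hAeq] at hφ
    rcases Finset.mem_union.mp hφ with h | h
    · rcases h1.2.1 φ h with h' | h'
      · exact Or.inl (Finset.mem_union_left _ h')
      · exact Or.inr (Finset.mem_union_left _ h')
    · rcases h2.2.1 φ h with h' | h'
      · exact Or.inl (Finset.mem_union_right _ h')
      · exact Or.inr (Finset.mem_union_right _ h')

lemma union_inter_left' {A1 A2 J1 J2 : Finset (Finset V)} (h1 : J1 ⊆ A1) (h2 : J2 ⊆ A2)
    (hd : Disjoint A1 A2) : (J1 ∪ J2) ∩ A1 = J1 := by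
  ext φ
  simp only [Finset.mem_inter, Finset.mem_union]
  constructor
  · rintro ⟨h | h, ha⟩
    · exact h
    · exact absurd ha (Finset.disjoint_right.mp hd (h2 h))
  · intro h; exact ⟨Or.inl h, h1 h⟩

lemma union_inter_right' {A1 A2 J1 J2 : Finset (Finset V)} (h1 : J1 ⊆ A1) (h2 : J2 ⊆ A2)
    (hd : Disjoint A1 A2) : (J1 ∪ J2) ∩ A2 = J2 := by
  rw [Finset.union_comm]; exact union_inter_left' h2 h1 hd.symm

lemma score_decomp (s : Finset (Finset V) → Finset V → ℝ) (hsep : SeparableScoring s)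
    {Γ : Finset V} {A A1 A2 : Finset (Finset V)} {n : ℕ} {P : Fin n → Finset (Finset V)}
    (hΓ : Γ.Nonempty) (hA : IsAgenda A) (hip : IndepPartition Γ A A1 A2)
    (hP : IsProfile Γ A P) {J : Finset (Finset V)} (hJ : J ⊆ A) :
    totalScore s P J =
      totalScore s (restrict P A1) (J ∩ A1) + totalScore s (restrict P A2) (J ∩ A2) := by
  unfold totalScore
  rw [← Finset.sum_add_distrib]
  apply Finset.sum_congr rfl
  intro i _
  have hsi := hsep Γ A A1 A2 hΓ hA hip (P i) (hP i)
  have hJsplit : J = (J ∩ A1) ∪ (J ∩ A2) := by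
    rw [← Finset.inter_union_distrib_left, hip.1, Finset.inter_eq_left.mpr hJ]
  have hdisj : Disjoint (J ∩ A1) (J ∩ A2) :=
    hip.2.1.mono Finset.inter_subset_right Finset.inter_subset_right
  calc ∑ φ ∈ J, s (P i) φ = ∑ φ ∈ (J ∩ A1) ∪ (J ∩ A2), s (P i) φ := by rw [← hJsplit]
    _ = (∑ φ ∈ J ∩ A1, s (P i) φ) + ∑ φ ∈ J ∩ A2, s (P i) φ := Finset.sum_union hdisj
    _ = (∑ φ ∈ J ∩ A1, s (restrict P A1 i) φ) + ∑ φ ∈ J ∩ A2, s (restrict P A2 i) φ := by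
        congr 1
        · exact Finset.sum_congr rfl fun φ hφ =>
            hsi.1 φ (Finset.mem_inter.mp hφ).2
        · exact Finset.sum_congr rfl fun φ hφ =>
            hsi.2 φ (Finset.mem_inter.mp hφ).2

/-- If `s` is a separable scoring function, then the scoring rule `R_s` is agenda separable. -/
theorem separable_scoring_rule_agenda_separable [Nonempty V]
    (s : Finset (Finset V) → Finset V → ℝ)
    (hnonneg : ∀ J φ, 0 ≤ s J φ) (hsep : SeparableScoring s) :
    ∀ (Γ : Finset V) (A A1 A2 : Finset (Finset V)) (n : ℕ) (P : Fin n → Finset (Finset V)),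
      Γ.Nonempty → IsAgenda A → IndepPartition Γ A A1 A2 → IsProfile Γ A P →
      scoringRule s Γ A P =
        pairUnions (scoringRule s Γ A1 (restrict P A1))
          (scoringRule s Γ A2 (restrict P A2)) := by
  intro Γ A A1 A2 n P hΓ hA hip hP
  have hA1sub : A1 ⊆ A := by rw [← hip.1]; exact Finset.subset_union_left
  have hA2sub : A2 ⊆ A := by rw [← hip.1]; exact Finset.subset_union_right
  have hdisj := hip.2.1
  ext J
  constructor
  · rintro ⟨hJmem, hJmax⟩
    have hJ1 : J ∩ A1 ∈ CCJ Γ A1 := inter_mem_CCJ hip.2.2.1 hA1sub hJmem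
    have hJ2 : J ∩ A2 ∈ CCJ Γ A2 := inter_mem_CCJ hip.2.2.2.1 hA2sub hJmem
    have hJsplit : J = (J ∩ A1) ∪ (J ∩ A2) := by
      rw [← Finset.inter_union_distrib_left, hip.1, Finset.inter_eq_left.mpr hJmem.1]
    refine ⟨J ∩ A1, ⟨hJ1, ?_⟩, J ∩ A2, ⟨hJ2, ?_⟩, hJsplit⟩
    · intro J1' hJ1'
      have hK : J1' ∪ (J ∩ A2) ∈ CCJ Γ A := union_mem_CCJ hip hJ1' hJ2
      have hle := hJmax _ hK
      rw [score_decomp s hsep hΓ hA hip hP hK.1,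
          score_decomp s hsep hΓ hA hip hP hJmem.1,
          union_inter_left' hJ1'.1 hJ2.1 hdisj,
          union_inter_right' hJ1'.1 hJ2.1 hdisj] at hle
      linarith
    · intro J2' hJ2'
      have hK : (J ∩ A1) ∪ J2' ∈ CCJ Γ A := union_mem_CCJ hip hJ1 hJ2'
      have hle := hJmax _ hK
      rw [score_decomp s hsep hΓ hA hip hP hK.1,
          score_decomp s hsep hΓ hA hip hP hJmem.1,
          union_inter_left' hJ1.1 hJ2'.1 hdisj,
          union_inter_right' hJ1.1 hJ2'.1 hdisj] at hle
      linarith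
  · rintro ⟨J1, ⟨hJ1, hJ1max⟩, J2, ⟨hJ2, hJ2max⟩, rfl⟩
    have hU : J1 ∪ J2 ∈ CCJ Γ A := union_mem_CCJ hip hJ1 hJ2
    refine ⟨hU, fun J' hJ' => ?_⟩
    rw [score_decomp s hsep hΓ hA hip hP hJ'.1,
        score_decomp s hsep hΓ hA hip hP hU.1,
        union_inter_left' hJ1.1 hJ2.1 hdisj,
        union_inter_right' hJ1.1 hJ2.1 hdisj]
    have h1 := hJ1max _ (inter_mem_CCJ hip.2.2.1 hA1sub hJ')
    have h2 := hJ2max _ (inter_mem_CCJ hip.2.2.2.1 hA2sub hJ')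
    linarith

end JA
end

section
/- The rule full_H is agenda separable: for every constrained agenda (A,Γ), every independent partition {A1,A2} of A, and every profile P over A, full_H(P) = { J1 ∪ J2 : J1 ∈ full_H(P↓A1), J2 ∈ full_H(P↓A2) }. -/
namespace JA

variable {V : Type*} [Fintype V] [DecidableEq V]

/-- The distance `D_H(P,Q) = Σ_i d_H(Pᵢ,Qᵢ)` between two profiles,
where `d_H(J,J') = |J \ J'|`. -/
def DH {n : ℕ} (P Q : Fin n → Finset (Finset V)) : ℕ :=
  ∑ i, (P i \ Q i).card

/-- The rule `full_H`: it selects the complete `Γ`-consistent judgment sets containing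
`m(Q)` for some majority-consistent profile `Q` minimizing `D_H(P,Q)` among all
majority-consistent profiles over `A`. -/
def fullH (Γ : Finset V) (A : Finset (Finset V)) {n : ℕ} (P : Fin n → Finset (Finset V)) :
    Set (Finset (Finset V)) :=
  {J | J ∈ CCJ Γ A ∧ ∃ Q : Fin n → Finset (Finset V), IsProfile Γ A Q ∧
    Consistent Γ (maj A Q) ∧
    (∀ Q' : Fin n → Finset (Finset V), IsProfile Γ A Q' → Consistent Γ (maj A Q') →
      DH P Q ≤ DH P Q') ∧
    maj A Q ⊆ J}

end JA

namespace JA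

variable {V : Type*} [Fintype V] [DecidableEq V]

theorem cons_mono {Γ : Finset V} {S T : Finset (Finset V)} (h : S ⊆ T)
    (hT : Consistent Γ T) : Consistent Γ S := by
  obtain ⟨v, hv, hsat⟩ := hT
  exact ⟨v, hv, fun φ hφ => hsat φ (h hφ)⟩

theorem extend_cons {Γ : Finset V} {A1 S : Finset (Finset V)} (hA1 : IsAgenda A1)
    (hS : S ⊆ A1) (hc : Consistent Γ S) : ∃ J ∈ CCJ Γ A1, S ⊆ J := by
  obtain ⟨v, hv, hsat⟩ := hc
  refine ⟨A1.filter (fun φ => v ∈ φ), ⟨Finset.filter_subset _ _, ?_, v, hv, ?_⟩, ?_⟩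
  · intro φ hφ
    by_cases h : v ∈ φ
    · exact Or.inl (Finset.mem_filter.mpr ⟨hφ, h⟩)
    · exact Or.inr (Finset.mem_filter.mpr ⟨hA1.1 φ hφ, by simpa using h⟩)
  · intro φ hφ; exact (Finset.mem_filter.mp hφ).2
  · intro φ hφ; exact Finset.mem_filter.mpr ⟨hS hφ, hsat φ hφ⟩

theorem cons_union' {Γ : Finset V} {A1 A2 S1 S2 : Finset (Finset V)}
    (hA1 : IsAgenda A1) (hA2 : IsAgenda A2)
    (hind : ∀ J1 ∈ CCJ Γ A1, ∀ J2 ∈ CCJ Γ A2, Consistent Γ (J1 ∪ J2))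
    (h1 : S1 ⊆ A1) (h2 : S2 ⊆ A2) (hc1 : Consistent Γ S1) (hc2 : Consistent Γ S2) :
    Consistent Γ (S1 ∪ S2) := by
  obtain ⟨J1, hJ1, hS1⟩ := extend_cons hA1 h1 hc1
  obtain ⟨J2, hJ2, hS2⟩ := extend_cons hA2 h2 hc2
  exact cons_mono (Finset.union_subset_union hS1 hS2) (hind J1 hJ1 J2 hJ2)

theorem ccj_inter {Γ : Finset V} {A A1 : Finset (Finset V)} {J : Finset (Finset V)}
    (hJ : J ∈ CCJ Γ A) (h1 : A1 ⊆ A) (hA1 : IsAgenda A1) : J ∩ A1 ∈ CCJ Γ A1 := by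
  obtain ⟨hsub, hcomp, hcons⟩ := hJ
  refine ⟨Finset.inter_subset_right, ?_, cons_mono Finset.inter_subset_left hcons⟩
  intro φ hφ
  rcases hcomp φ (h1 hφ) with h | h
  · exact Or.inl (Finset.mem_inter.mpr ⟨h, hφ⟩)
  · exact Or.inr (Finset.mem_inter.mpr ⟨h, hA1.1 φ hφ⟩)

theorem ccj_union {Γ : Finset V} {A A1 A2 : Finset (Finset V)} {J1 J2 : Finset (Finset V)}
    (h12 : A1 ∪ A2 = A)
    (hind : ∀ K1 ∈ CCJ Γ A1, ∀ K2 ∈ CCJ Γ A2, Consistent Γ (K1 ∪ K2))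
    (hJ1 : J1 ∈ CCJ Γ A1) (hJ2 : J2 ∈ CCJ Γ A2) : J1 ∪ J2 ∈ CCJ Γ A := by
  refine ⟨?_, ?_, hind _ hJ1 _ hJ2⟩
  · rw [← h12]; exact Finset.union_subset_union hJ1.1 hJ2.1
  · intro φ hφ
    rw [← h12, Finset.mem_union] at hφ
    rcases hφ with h | h
    · rcases hJ1.2.1 φ h with h' | h'
      · exact Or.inl (Finset.mem_union_left _ h')
      · exact Or.inr (Finset.mem_union_left _ h')
    · rcases hJ2.2.1 φ h with h' | h'
      · exact Or.inl (Finset.mem_union_right _ h')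
      · exact Or.inr (Finset.mem_union_right _ h')

theorem ncount_restrict {n : ℕ} (Q : Fin n → Finset (Finset V)) {B : Finset (Finset V)}
    {φ : Finset V} (hφ : φ ∈ B) : Ncount (restrict Q B) φ = Ncount Q φ := by
  unfold Ncount restrict
  congr 1
  ext i
  simp [Finset.mem_inter, hφ]

theorem maj_restrict {n : ℕ} (Q : Fin n → Finset (Finset V)) {A A1 : Finset (Finset V)}
    (h1 : A1 ⊆ A) : maj A1 (restrict Q A1) = maj A Q ∩ A1 := by
  ext φ
  simp only [maj, Finset.mem_filter, Finset.mem_inter]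
  constructor
  · rintro ⟨hφ, hc⟩
    rw [ncount_restrict Q hφ] at hc
    exact ⟨⟨h1 hφ, hc⟩, hφ⟩
  · rintro ⟨⟨_, hc⟩, hφ⟩
    exact ⟨hφ, by rw [ncount_restrict Q hφ]; exact hc⟩

theorem maj_eq_union {n : ℕ} {A A1 A2 : Finset (Finset V)} (h12 : A1 ∪ A2 = A)
    (Q : Fin n → Finset (Finset V)) :
    maj A Q = maj A1 (restrict Q A1) ∪ maj A2 (restrict Q A2) := by
  have h1 : A1 ⊆ A := h12 ▸ Finset.subset_union_left
  have h2 : A2 ⊆ A := h12 ▸ Finset.subset_union_right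
  rw [maj_restrict Q h1, maj_restrict Q h2, ← Finset.inter_union_distrib_left, h12]
  exact (Finset.inter_eq_left.mpr (Finset.filter_subset _ _)).symm

theorem restrict_union_left {n : ℕ} {Q1 Q2 : Fin n → Finset (Finset V)}
    {A1 A2 : Finset (Finset V)} (hd : Disjoint A1 A2)
    (h1 : ∀ i, Q1 i ⊆ A1) (h2 : ∀ i, Q2 i ⊆ A2) :
    restrict (fun i => Q1 i ∪ Q2 i) A1 = Q1 := by
  funext i
  have h0 : Q2 i ∩ A1 = ∅ := by
    apply Finset.eq_empty_of_forall_notMem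
    intro x hx
    rw [Finset.mem_inter] at hx
    exact Finset.disjoint_left.mp hd hx.2 (h2 i hx.1)
  show (Q1 i ∪ Q2 i) ∩ A1 = Q1 i
  rw [Finset.union_inter_distrib_right, Finset.inter_eq_left.mpr (h1 i), h0,
    Finset.union_empty]

theorem restrict_union_right {n : ℕ} {Q1 Q2 : Fin n → Finset (Finset V)}
    {A1 A2 : Finset (Finset V)} (hd : Disjoint A1 A2)
    (h1 : ∀ i, Q1 i ⊆ A1) (h2 : ∀ i, Q2 i ⊆ A2) :
    restrict (fun i => Q1 i ∪ Q2 i) A2 = Q2 := by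
  funext i
  have h0 : Q1 i ∩ A2 = ∅ := by
    apply Finset.eq_empty_of_forall_notMem
    intro x hx
    rw [Finset.mem_inter] at hx
    exact Finset.disjoint_left.mp hd (h1 i hx.1) hx.2
  show (Q1 i ∪ Q2 i) ∩ A2 = Q2 i
  rw [Finset.union_inter_distrib_right, Finset.inter_eq_left.mpr (h2 i), h0,
    Finset.empty_union]

theorem dh_split {n : ℕ} {A A1 A2 : Finset (Finset V)} (h12 : A1 ∪ A2 = A)
    (hd : Disjoint A1 A2) {P Q : Fin n → Finset (Finset V)} (hP : ∀ i, P i ⊆ A) :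
    DH P Q = DH (restrict P A1) (restrict Q A1) + DH (restrict P A2) (restrict Q A2) := by
  unfold DH
  rw [← Finset.sum_add_distrib]
  apply Finset.sum_congr rfl
  intro i _
  have heq : P i \ Q i = ((P i ∩ A1) \ (Q i ∩ A1)) ∪ ((P i ∩ A2) \ (Q i ∩ A2)) := by
    ext x
    simp only [Finset.mem_sdiff, Finset.mem_union, Finset.mem_inter]
    constructor
    · rintro ⟨hx, hnx⟩
      have hxA := hP i hx
      rw [← h12, Finset.mem_union] at hxA
      rcases hxA with h | h
      · exact Or.inl ⟨⟨hx, h⟩, fun hc => hnx hc.1⟩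
      · exact Or.inr ⟨⟨hx, h⟩, fun hc => hnx hc.1⟩
    · rintro (⟨⟨hx, h⟩, hnx⟩ | ⟨⟨hx, h⟩, hnx⟩)
      · exact ⟨hx, fun hc => hnx ⟨hc, h⟩⟩
      · exact ⟨hx, fun hc => hnx ⟨hc, h⟩⟩
  have hdisj : Disjoint ((P i ∩ A1) \ (Q i ∩ A1)) ((P i ∩ A2) \ (Q i ∩ A2)) :=
    hd.mono (Finset.sdiff_subset.trans Finset.inter_subset_right)
      (Finset.sdiff_subset.trans Finset.inter_subset_right)
  show (P i \ Q i).card = ((P i ∩ A1) \ (Q i ∩ A1)).card + ((P i ∩ A2) \ (Q i ∩ A2)).card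
  rw [heq, Finset.card_union_of_disjoint hdisj]

end JA

namespace JA

/-- The rule `full_H` is agenda separable. -/
theorem fullH_agenda_separable {V : Type*} [Fintype V] [DecidableEq V] [Nonempty V] :
    ∀ (Γ : Finset V) (A A1 A2 : Finset (Finset V)) (n : ℕ) (P : Fin n → Finset (Finset V)),
      Γ.Nonempty → IsAgenda A → IndepPartition Γ A A1 A2 → IsProfile Γ A P →
      fullH Γ A P = pairUnions (fullH Γ A1 (restrict P A1)) (fullH Γ A2 (restrict P A2)) := by
  intro Γ A A1 A2 n P hΓ hA hpart hP
  obtain ⟨h12, hdisj, hA1, hA2, hind⟩ := hpart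
  have h1A : A1 ⊆ A := h12 ▸ Finset.subset_union_left
  have h2A : A2 ⊆ A := h12 ▸ Finset.subset_union_right
  have hPsub : ∀ i, P i ⊆ A := fun i => (hP i).1
  ext J
  constructor
  · rintro ⟨hJ, Q, hQp, hQc, hQm, hQmaj⟩
    have hQ1p : IsProfile Γ A1 (restrict Q A1) := fun i => ccj_inter (hQp i) h1A hA1
    have hQ2p : IsProfile Γ A2 (restrict Q A2) := fun i => ccj_inter (hQp i) h2A hA2
    have hm1 : maj A1 (restrict Q A1) = maj A Q ∩ A1 := maj_restrict Q h1A
    have hm2 : maj A2 (restrict Q A2) = maj A Q ∩ A2 := maj_restrict Q h2A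
    have hc1 : Consistent Γ (maj A1 (restrict Q A1)) := by
      rw [hm1]; exact cons_mono Finset.inter_subset_left hQc
    have hc2 : Consistent Γ (maj A2 (restrict Q A2)) := by
      rw [hm2]; exact cons_mono Finset.inter_subset_left hQc
    refine ⟨J ∩ A1, ⟨ccj_inter hJ h1A hA1, restrict Q A1, hQ1p, hc1, ?_, ?_⟩,
            J ∩ A2, ⟨ccj_inter hJ h2A hA2, restrict Q A2, hQ2p, hc2, ?_, ?_⟩, ?_⟩
    · -- minimality on A1
      intro Q1' hQ1'p hQ1'c
      have hQ1'sub : ∀ i, Q1' i ⊆ A1 := fun i => (hQ1'p i).1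
      have hQ2sub : ∀ i, restrict Q A2 i ⊆ A2 := fun i => (hQ2p i).1
      set Q' : Fin n → Finset (Finset V) := fun i => Q1' i ∪ restrict Q A2 i with hQ'def
      have hQ'p : IsProfile Γ A Q' := fun i => ccj_union h12 hind (hQ1'p i) (hQ2p i)
      have hr1 : restrict Q' A1 = Q1' := restrict_union_left hdisj hQ1'sub hQ2sub
      have hr2 : restrict Q' A2 = restrict Q A2 := restrict_union_right hdisj hQ1'sub hQ2sub
      have hmq' : maj A Q' = maj A1 Q1' ∪ maj A2 (restrict Q A2) := by
        rw [maj_eq_union h12 Q', hr1, hr2]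
      have hmc : Consistent Γ (maj A Q') := by
        rw [hmq']
        exact cons_union' hA1 hA2 hind (Finset.filter_subset _ _)
          (Finset.filter_subset _ _) hQ1'c hc2
      have hle := hQm Q' hQ'p hmc
      rw [dh_split h12 hdisj hPsub (Q := Q), dh_split h12 hdisj hPsub (Q := Q'),
        hr1, hr2] at hle
      omega
    · rw [hm1]; exact Finset.inter_subset_inter hQmaj (Finset.Subset.refl A1)
    · -- minimality on A2
      intro Q2' hQ2'p hQ2'c
      have hQ2'sub : ∀ i, Q2' i ⊆ A2 := fun i => (hQ2'p i).1
      have hQ1sub : ∀ i, restrict Q A1 i ⊆ A1 := fun i => (hQ1p i).1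
      set Q' : Fin n → Finset (Finset V) := fun i => restrict Q A1 i ∪ Q2' i with hQ'def
      have hQ'p : IsProfile Γ A Q' := fun i => ccj_union h12 hind (hQ1p i) (hQ2'p i)
      have hr1 : restrict Q' A1 = restrict Q A1 := restrict_union_left hdisj hQ1sub hQ2'sub
      have hr2 : restrict Q' A2 = Q2' := restrict_union_right hdisj hQ1sub hQ2'sub
      have hmq' : maj A Q' = maj A1 (restrict Q A1) ∪ maj A2 Q2' := by
        rw [maj_eq_union h12 Q', hr1, hr2]
      have hmc : Consistent Γ (maj A Q') := by
        rw [hmq']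
        exact cons_union' hA1 hA2 hind (Finset.filter_subset _ _)
          (Finset.filter_subset _ _) hc1 hQ2'c
      have hle := hQm Q' hQ'p hmc
      rw [dh_split h12 hdisj hPsub (Q := Q), dh_split h12 hdisj hPsub (Q := Q'),
        hr1, hr2] at hle
      omega
    · rw [hm2]; exact Finset.inter_subset_inter hQmaj (Finset.Subset.refl A2)
    · rw [← Finset.inter_union_distrib_left, h12, Finset.inter_eq_left.mpr hJ.1]
  · rintro ⟨J1, ⟨hJ1, Q1, hQ1p, hQ1c, hQ1m, hQ1maj⟩,
           J2, ⟨hJ2, Q2, hQ2p, hQ2c, hQ2m, hQ2maj⟩, rfl⟩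
    have hQ1sub : ∀ i, Q1 i ⊆ A1 := fun i => (hQ1p i).1
    have hQ2sub : ∀ i, Q2 i ⊆ A2 := fun i => (hQ2p i).1
    set Q : Fin n → Finset (Finset V) := fun i => Q1 i ∪ Q2 i with hQdef
    have hQp : IsProfile Γ A Q := fun i => ccj_union h12 hind (hQ1p i) (hQ2p i)
    have hr1 : restrict Q A1 = Q1 := restrict_union_left hdisj hQ1sub hQ2sub
    have hr2 : restrict Q A2 = Q2 := restrict_union_right hdisj hQ1sub hQ2sub
    have hmq : maj A Q = maj A1 Q1 ∪ maj A2 Q2 := by rw [maj_eq_union h12 Q, hr1, hr2]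
    refine ⟨ccj_union h12 hind hJ1 hJ2, Q, hQp, ?_, ?_, ?_⟩
    · rw [hmq]
      exact cons_union' hA1 hA2 hind (Finset.filter_subset _ _)
        (Finset.filter_subset _ _) hQ1c hQ2c
    · intro Q' hQ'p hQ'c
      have h1 := hQ1m (restrict Q' A1) (fun i => ccj_inter (hQ'p i) h1A hA1)
        (by rw [maj_restrict Q' h1A]; exact cons_mono Finset.inter_subset_left hQ'c)
      have h2 := hQ2m (restrict Q' A2) (fun i => ccj_inter (hQ'p i) h2A hA2)
        (by rw [maj_restrict Q' h2A]; exact cons_mono Finset.inter_subset_left hQ'c)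
      rw [dh_split h12 hdisj hPsub (Q := Q), dh_split h12 hdisj hPsub (Q := Q'), hr1, hr2]
      omega
    · rw [hmq]; exact Finset.union_subset_union hQ1maj hQ2maj

end JA
end

section
/- The rule R^{dH,max} is not agenda separable: there exist a constrained agenda (A,Γ) with Γ = ⊤, an independent partition {A1,A2} of A, and a profile P over A such that R^{dH,max}(P) ≠ { J1 ∪ J2 : J1 ∈ R^{dH,max}(P↓A1), J2 ∈ R^{dH,max}(P↓A2) }. A witness: preagendas [A1] = {p, q, p∧q} and [A2] = {t} over propositional atoms p, q, t, with the three-agent profile P = ⟨{p, q, p∧q, t}, {p, ¬q, ¬(p∧q), t}, {¬p, q, ¬(p∧q), ¬t}⟩, for which R^{dH,max}(P) = {{¬p, q, ¬(p∧q), t}} while R^{dH,max}(P↓A2) = {{t},{¬t}}. -/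
namespace JA

variable {V : Type*} [Fintype V] [DecidableEq V]

/-- The rule `R^{d_H,max}`: it selects the complete `Γ`-consistent judgment sets `J`
minimizing `max_i d_H(Pᵢ, J)`, where `d_H(J,J') = |J \ J'|`. -/
def Rmax (Γ : Finset V) (A : Finset (Finset V)) {n : ℕ} (P : Fin n → Finset (Finset V)) :
    Set (Finset (Finset V)) :=
  {J | J ∈ CCJ Γ A ∧ ∀ J' ∈ CCJ Γ A,
    (Finset.univ.sup fun i => (P i \ J).card) ≤ Finset.univ.sup fun i => (P i \ J').card}


/-- Auxiliary decidability instance for `Consistent`. -/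
instance (Γ : Finset V) (J : Finset (Finset V)) : Decidable (Consistent Γ J) := by
  unfold Consistent; infer_instance

/-- Computable version of `CCJ`. -/
def CCJF (Γ : Finset V) (A : Finset (Finset V)) : Finset (Finset (Finset V)) :=
  A.powerset.filter fun J => (∀ φ ∈ A, φ ∈ J ∨ φᶜ ∈ J) ∧ Consistent Γ J

lemma mem_CCJF {Γ : Finset V} {A J : Finset (Finset V)} :
    J ∈ CCJF Γ A ↔ J ∈ CCJ Γ A := by
  simp [CCJF, CCJ, Finset.mem_filter, Finset.mem_powerset, Set.mem_setOf_eq, and_assoc]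

/-- The minimality condition of `Rmax`. -/
def DistLE (Γ : Finset V) (A : Finset (Finset V)) {n : ℕ} (P : Fin n → Finset (Finset V))
    (J : Finset (Finset V)) : Prop :=
  ∀ J' ∈ CCJF Γ A,
    (Finset.univ.sup fun i => (P i \ J).card) ≤ Finset.univ.sup fun i => (P i \ J').card

instance {Γ : Finset V} {A : Finset (Finset V)} {n : ℕ} {P : Fin n → Finset (Finset V)}
    {J : Finset (Finset V)} : Decidable (DistLE Γ A P J) :=
  Finset.decidableDforallFinset

def RmaxF (Γ : Finset V) (A : Finset (Finset V)) {n : ℕ} (P : Fin n → Finset (Finset V)) :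
    Finset (Finset (Finset V)) :=
  (CCJF Γ A).filter (DistLE Γ A P)

lemma mem_RmaxF {Γ : Finset V} {A : Finset (Finset V)} {n : ℕ}
    {P : Fin n → Finset (Finset V)} {J : Finset (Finset V)} :
    J ∈ RmaxF Γ A P ↔ J ∈ Rmax Γ A P := by
  unfold RmaxF Rmax
  rw [Finset.mem_filter]
  unfold DistLE
  constructor
  · rintro ⟨h1, h2⟩
    exact ⟨mem_CCJF.mp h1, fun J' hJ' => h2 J' (mem_CCJF.mpr hJ')⟩
  · rintro ⟨h1, h2⟩
    exact ⟨mem_CCJF.mpr h1, fun J' hJ' => h2 J' (mem_CCJF.mp hJ')⟩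

namespace Stmt8

/-- Valuations over the three atoms `p`, `q`, `t`. -/
abbrev W : Type := Bool × Bool × Bool

/-- The formula (model set) of the atom `p`. -/
def pf : Finset W := Finset.univ.filter fun v => v.1 = true
/-- The formula (model set) of the atom `q`. -/
def qf : Finset W := Finset.univ.filter fun v => v.2.1 = true
/-- The formula (model set) of the atom `t`. -/
def tf : Finset W := Finset.univ.filter fun v => v.2.2 = true
/-- The formula `p ∧ q`. -/
def pq : Finset W := pf ∩ qf

/-- The sub-agenda with preagenda `{p, q, p ∧ q}`. -/
def cA1 : Finset (Finset W) := {pf, qf, pq, pfᶜ, qfᶜ, pqᶜ}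
/-- The sub-agenda with preagenda `{t}`. -/
def cA2 : Finset (Finset W) := {tf, tfᶜ}
/-- The agenda `A = A1 ∪ A2`. -/
def cA : Finset (Finset W) := cA1 ∪ cA2
/-- The constraint `Γ = ⊤`. -/
def cΓ : Finset W := Finset.univ

/-- The three-agent profile of the counterexample. -/
def cP : Fin 3 → Finset (Finset W) :=
  ![{pf, qf, pq, tf}, {pf, qfᶜ, pqᶜ, tf}, {pfᶜ, qf, pqᶜ, tfᶜ}]


set_option maxRecDepth 400000 in
set_option maxHeartbeats 8000000 in
lemma hRmaxA : RmaxF cΓ cA cP = {({pfᶜ, qf, pqᶜ, tf} : Finset (Finset W))} := by decide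

set_option maxRecDepth 400000 in
set_option maxHeartbeats 8000000 in
lemma hRmaxA2 : RmaxF cΓ cA2 (restrict cP cA2) =
    {({tf} : Finset (Finset W)), ({tfᶜ} : Finset (Finset W))} := by decide

set_option maxRecDepth 400000 in
set_option maxHeartbeats 8000000 in
lemma hJ1mem : ({pf, qf, pq} : Finset (Finset W)) ∈ RmaxF cΓ cA1 (restrict cP cA1) := by
  decide

set_option maxRecDepth 400000 in
set_option maxHeartbeats 8000000 in
lemma hprofile : ∀ i, cP i ∈ CCJF cΓ cA := by decide

set_option maxRecDepth 400000 in
set_option maxHeartbeats 8000000 in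
lemma hindep : ∀ J1 ∈ CCJF cΓ cA1, ∀ J2 ∈ CCJF cΓ cA2, Consistent cΓ (J1 ∪ J2) := by
  decide

set_option maxRecDepth 400000 in
set_option maxHeartbeats 8000000 in
/-- The rule `R^{d_H,max}` is not agenda separable, as witnessed by the
agenda with preagendas `[A1] = {p, q, p ∧ q}`, `[A2] = {t}` and the profile `cP`. -/
theorem rmax_not_agenda_separable :
    cΓ.Nonempty ∧ IsAgenda cA ∧ IndepPartition cΓ cA cA1 cA2 ∧ IsProfile cΓ cA cP ∧
    Rmax cΓ cA cP = {({pfᶜ, qf, pqᶜ, tf} : Finset (Finset W))} ∧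
    Rmax cΓ cA2 (restrict cP cA2) = {({tf} : Finset (Finset W)), ({tfᶜ} : Finset (Finset W))} ∧
    Rmax cΓ cA cP ≠
      pairUnions (Rmax cΓ cA1 (restrict cP cA1)) (Rmax cΓ cA2 (restrict cP cA2)) := by
  have h5 : Rmax cΓ cA cP = {({pfᶜ, qf, pqᶜ, tf} : Finset (Finset W))} := by
    ext J
    simp only [Set.mem_singleton_iff]
    constructor
    · intro h
      have := mem_RmaxF.mpr h
      rw [hRmaxA] at this
      simpa using this
    · intro h
      subst h
      apply mem_RmaxF.mp
      rw [hRmaxA]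
      simp
  have h6 : Rmax cΓ cA2 (restrict cP cA2) =
      {({tf} : Finset (Finset W)), ({tfᶜ} : Finset (Finset W))} := by
    ext J
    simp only [Set.mem_insert_iff, Set.mem_singleton_iff]
    constructor
    · intro h
      have := mem_RmaxF.mpr h
      rw [hRmaxA2] at this
      simpa using this
    · intro h
      apply mem_RmaxF.mp
      rw [hRmaxA2]
      rcases h with h | h <;> subst h <;> simp
  refine ⟨⟨(true, true, true), by decide⟩, ⟨by decide, by decide⟩,
    ⟨by decide, by decide, ⟨by decide, by decide⟩, ⟨by decide, by decide⟩,
      fun J1 hJ1 J2 hJ2 => hindep J1 (mem_CCJF.mpr hJ1) J2 (mem_CCJF.mpr hJ2)⟩,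
    fun i => mem_CCJF.mp (hprofile i), h5, h6, ?_⟩
  intro h
  have hY : ({pf, qf, pq, tf} : Finset (Finset W)) ∈
      pairUnions (Rmax cΓ cA1 (restrict cP cA1)) (Rmax cΓ cA2 (restrict cP cA2)) := by
    refine ⟨{pf, qf, pq}, mem_RmaxF.mp hJ1mem, {tf}, ?_, by decide⟩
    apply mem_RmaxF.mp
    rw [hRmaxA2]
    simp
  rw [← h, h5] at hY
  have : ({pf, qf, pq, tf} : Finset (Finset W)) = {pfᶜ, qf, pqᶜ, tf} := hY
  exact absurd this (by decide)

end Stmt8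

end JA
end

section
/- The rule full_H does not satisfy overlapping agenda separability: there exist a constrained agenda (A,Γ) with Γ = ⊤, an independent overlapping decomposition {A1,A2} of A, and a profile P over A such that for all J1 ∈ full_H(P↓A1) and J2 ∈ full_H(P↓A2) we have J1 ∩ A2 = J2 ∩ A1, yet full_H(P) ≠ { J1 ∪ J2 : J1 ∈ full_H(P↓A1), J2 ∈ full_H(P↓A2) }. A witness: preagendas [A1] = {p, p→q, p→r, q, r} and [A2] = {q, r, s, s→q, s→r} over atoms p,q,r,s, with the three-agent profile whose judgment sets are (on p, p→q, p→r, q, r, s, s→q, s→r): (+,+,+,+,+,+,+,+), (−,+,+,−,−,−,+,+), (+,−,−,−,−,+,−,−). -/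
namespace JA
namespace Witness

/-- Valuations over the four atoms `p`, `q`, `r`, `s`. -/
abbrev W : Type := Bool × Bool × Bool × Bool

/-- The formula (model set) of the atom `p`. -/
def pf : Finset W := Finset.univ.filter fun v => v.1 = true
/-- The formula (model set) of the atom `q`. -/
def qf : Finset W := Finset.univ.filter fun v => v.2.1 = true
/-- The formula (model set) of the atom `r`. -/
def rf : Finset W := Finset.univ.filter fun v => v.2.2.1 = true
/-- The formula (model set) of the atom `s`. -/
def sf : Finset W := Finset.univ.filter fun v => v.2.2.2 = true
/-- The formula `p → q`. -/
def ipq : Finset W := pfᶜ ∪ qf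
/-- The formula `p → r`. -/
def ipr : Finset W := pfᶜ ∪ rf
/-- The formula `s → q`. -/
def isq : Finset W := sfᶜ ∪ qf
/-- The formula `s → r`. -/
def isr : Finset W := sfᶜ ∪ rf

/-- The sub-agenda with preagenda `{p, p → q, p → r, q, r}`. -/
def cA1 : Finset (Finset W) := {pf, ipq, ipr, qf, rf, pfᶜ, ipqᶜ, iprᶜ, qfᶜ, rfᶜ}
/-- The sub-agenda with preagenda `{q, r, s, s → q, s → r}`. -/
def cA2 : Finset (Finset W) := {qf, rf, sf, isq, isr, qfᶜ, rfᶜ, sfᶜ, isqᶜ, isrᶜ}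
/-- The agenda `A = A1 ∪ A2`. -/
def cA : Finset (Finset W) := cA1 ∪ cA2
/-- The constraint `Γ = ⊤`. -/
def cΓ : Finset W := Finset.univ

/-- The three-agent profile of the counterexample: on
`(p, p→q, p→r, q, r, s, s→q, s→r)` the agents vote
`(+,+,+,+,+,+,+,+)`, `(−,+,+,−,−,−,+,+)`, `(+,−,−,−,−,+,−,−)`. -/
def cP : Fin 3 → Finset (Finset W) :=
  ![{pf, ipq, ipr, qf, rf, sf, isq, isr},
    {pfᶜ, ipq, ipr, qfᶜ, rfᶜ, sfᶜ, isq, isr},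
    {pf, ipqᶜ, iprᶜ, qfᶜ, rfᶜ, sf, isqᶜ, isrᶜ}]

end Witness
end JA

set_option linter.unusedSectionVars false

namespace JA

open Finset

variable {V : Type*} [Fintype V] [DecidableEq V]

lemma consistent_mono {Γ : Finset V} {m J : Finset (Finset V)} (h : m ⊆ J)
    (hJ : Consistent Γ J) : Consistent Γ m := by
  obtain ⟨v, hv, h2⟩ := hJ
  exact ⟨v, hv, fun φ hφ => h2 φ (h hφ)⟩

lemma two_le_Ncount {n : ℕ} {P : Fin n → Finset (Finset V)} {φ : Finset V} {i j : Fin n}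
    (hij : i ≠ j) (hi : φ ∈ P i) (hj : φ ∈ P j) : 2 ≤ Ncount P φ := by
  have hsub : ({i, j} : Finset (Fin n)) ⊆ Finset.univ.filter (fun k => φ ∈ P k) := by
    intro x hx
    simp only [Finset.mem_insert, Finset.mem_singleton] at hx
    rcases hx with rfl | rfl <;> simp [hi, hj]
  calc 2 = ({i, j} : Finset (Fin n)).card := (Finset.card_pair hij).symm
    _ ≤ _ := Finset.card_le_card hsub

lemma Ncount_le_of_sub {n : ℕ} {P Q : Fin n → Finset (Finset V)}
    (h : ∀ i, P i ⊆ Q i) (φ : Finset V) : Ncount P φ ≤ Ncount Q φ := by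
  apply Finset.card_le_card
  intro i hi
  simp only [Finset.mem_filter, Finset.mem_univ, true_and] at hi ⊢
  exact h i hi

lemma Ncount_congr {n : ℕ} {P Q : Fin n → Finset (Finset V)} {φ : Finset V}
    (h : ∀ i, φ ∈ Q i ↔ φ ∈ P i) : Ncount Q φ = Ncount P φ := by
  unfold Ncount
  congr 1
  apply Finset.filter_congr
  intro i _
  exact h i

lemma exists_lost {n : ℕ} {P Q : Fin n → Finset (Finset V)} {φ : Finset V}
    (h : Ncount Q φ < Ncount P φ) : ∃ i, φ ∈ P i ∧ φ ∉ Q i := by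
  by_contra hc
  push_neg at hc
  have : Ncount P φ ≤ Ncount Q φ := by
    apply Finset.card_le_card
    intro i hi
    simp only [Finset.mem_filter, Finset.mem_univ, true_and] at hi ⊢
    exact hc i hi
  omega

lemma two_le_DH_of_two_decrease {n : ℕ} {P Q : Fin n → Finset (Finset V)} {φ ψ : Finset V}
    (hne : φ ≠ ψ) (hφ : Ncount Q φ < Ncount P φ) (hψ : Ncount Q ψ < Ncount P ψ) :
    2 ≤ DH P Q := by
  obtain ⟨i, hi1, hi2⟩ := exists_lost hφ
  obtain ⟨j, hj1, hj2⟩ := exists_lost hψ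
  by_cases hij : i = j
  · subst hij
    have hsub : ({φ, ψ} : Finset (Finset V)) ⊆ P i \ Q i := by
      intro x hx
      simp only [Finset.mem_insert, Finset.mem_singleton] at hx
      rcases hx with rfl | rfl <;> simp [Finset.mem_sdiff, hi1, hi2, hj1, hj2]
    have h2 : 2 ≤ (P i \ Q i).card := by
      calc 2 = ({φ, ψ} : Finset (Finset V)).card := (Finset.card_pair hne).symm
        _ ≤ _ := Finset.card_le_card hsub
    have h3 : (P i \ Q i).card ≤ DH P Q := by
      unfold DH
      exact Finset.single_le_sum (f := fun k => (P k \ Q k).card) (fun _ _ => Nat.zero_le _) (Finset.mem_univ i)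
    omega
  · have h3 : ∑ x ∈ ({i, j} : Finset (Fin n)), (P x \ Q x).card ≤ DH P Q :=
      Finset.sum_le_sum_of_subset (Finset.subset_univ _)
    rw [Finset.sum_pair hij] at h3
    have h4 : 1 ≤ (P i \ Q i).card :=
      Finset.card_pos.mpr ⟨φ, Finset.mem_sdiff.mpr ⟨hi1, hi2⟩⟩
    have h5 : 1 ≤ (P j \ Q j).card :=
      Finset.card_pos.mpr ⟨ψ, Finset.mem_sdiff.mpr ⟨hj1, hj2⟩⟩
    omega

lemma ccj_eq_of_subset {Γ : Finset V} {B J K : Finset (Finset V)}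
    (hJ : J ∈ CCJ Γ B) (hK : K ∈ CCJ Γ B) (h : J ⊆ K) : K = J := by
  refine Finset.Subset.antisymm ?_ h
  intro φ hφ
  obtain ⟨hsK, _, ⟨w, _, hw⟩⟩ := hK
  obtain ⟨hsJ, hcJ, _⟩ := hJ
  rcases hcJ φ (hsK hφ) with h1 | h1
  · exact h1
  · exact absurd (hw φ hφ) (by simpa using hw φᶜ (h h1))

lemma one_flip {Γ : Finset V} {B : Finset (Finset V)} {n : ℕ}
    {P Q : Fin n → Finset (Finset V)}
    (hP : IsProfile Γ B P) (hQ : IsProfile Γ B Q) (hdh : DH P Q = 1) :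
    ∃ i0 φ0, φ0 ∈ P i0 ∧ φ0 ∉ Q i0 ∧ (∀ i, i ≠ i0 → Q i = P i) ∧
      (∀ ψ, ψ ≠ φ0 → ψ ≠ φ0ᶜ → (ψ ∈ Q i0 ↔ ψ ∈ P i0)) := by
  unfold DH at hdh
  obtain ⟨i0, hi0⟩ : ∃ i, (P i \ Q i).card ≠ 0 := by
    by_contra h
    push_neg at h
    rw [Finset.sum_eq_zero (fun i _ => h i)] at hdh
    omega
  have hsplit : (P i0 \ Q i0).card + ∑ i ∈ Finset.univ.erase i0, (P i \ Q i).card = 1 := by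
    rw [Finset.add_sum_erase _ (fun k => (P k \ Q k).card) (Finset.mem_univ i0)]
    exact hdh
  have hcard1 : (P i0 \ Q i0).card = 1 := by omega
  have hrest : ∀ i, i ≠ i0 → (P i \ Q i).card = 0 := by
    intro i hi
    have h0 : ∑ i ∈ Finset.univ.erase i0, (P i \ Q i).card = 0 := by omega
    exact Finset.sum_eq_zero_iff.mp h0 i (Finset.mem_erase.mpr ⟨hi, Finset.mem_univ i⟩)
  obtain ⟨φ0, hφ0⟩ := Finset.card_eq_one.mp hcard1
  have hmem : φ0 ∈ P i0 ∧ φ0 ∉ Q i0 := by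
    have : φ0 ∈ P i0 \ Q i0 := hφ0 ▸ Finset.mem_singleton_self φ0
    exact Finset.mem_sdiff.mp this
  refine ⟨i0, φ0, hmem.1, hmem.2, ?_, ?_⟩
  · intro i hi
    have hsub : P i ⊆ Q i := by
      intro x hx
      by_contra hxn
      have : x ∈ P i \ Q i := Finset.mem_sdiff.mpr ⟨hx, hxn⟩
      rw [Finset.card_eq_zero.mp (hrest i hi)] at this
      simp at this
    exact ccj_eq_of_subset (hP i) (hQ i) hsub
  · intro ψ h1 h2
    constructor
    · intro hψQ
      obtain ⟨hsQ, _, ⟨w, _, hw⟩⟩ := hQ i0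
      obtain ⟨_, hcP, _⟩ := hP i0
      rcases hcP ψ (hsQ hψQ) with h3 | h3
      · exact h3
      · exfalso
        by_cases h4 : ψᶜ ∈ Q i0
        · exact absurd (hw ψ hψQ) (by simpa using hw ψᶜ h4)
        · have : ψᶜ ∈ P i0 \ Q i0 := Finset.mem_sdiff.mpr ⟨h3, h4⟩
          rw [hφ0] at this
          have : ψᶜ = φ0 := Finset.mem_singleton.mp this
          exact h2 (by rw [← this, compl_compl])
    · intro hψP
      by_contra hψQ
      have : ψ ∈ P i0 \ Q i0 := Finset.mem_sdiff.mpr ⟨hψP, hψQ⟩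
      rw [hφ0] at this
      exact h1 (Finset.mem_singleton.mp this)

end JA
namespace JA
namespace Witness

open Finset

/-- Judgment set of world `v` over sub-agenda `B`. -/
def Jw (B : Finset (Finset W)) (v : W) : Finset (Finset W) := B.filter (fun φ => v ∈ φ)

lemma Jw_mem_CCJ {B : Finset (Finset W)} (hcl : ∀ φ ∈ B, φᶜ ∈ B) (v : W) :
    Jw B v ∈ CCJ cΓ B := by
  refine ⟨Finset.filter_subset _ _, ?_, v, Finset.mem_univ v, ?_⟩
  · intro φ hφ
    by_cases h : v ∈ φ
    · exact Or.inl (Finset.mem_filter.mpr ⟨hφ, h⟩)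
    · exact Or.inr (Finset.mem_filter.mpr ⟨hcl φ hφ, Finset.mem_compl.mpr h⟩)
  · intro φ hφ
    exact (Finset.mem_filter.mp hφ).2

def w0 : W := (true, true, true, true)
def w1 : W := (false, false, false, false)
def w2 : W := (true, false, false, true)

lemma hcl1 : ∀ φ ∈ cA1, φᶜ ∈ cA1 := by decide
lemma hcl2 : ∀ φ ∈ cA2, φᶜ ∈ cA2 := by decide
lemma hclA : ∀ φ ∈ cA, φᶜ ∈ cA := by decide

lemma cP_eq : cP = ![Jw cA w0, Jw cA w1, Jw cA w2] := by
  funext i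
  fin_cases i <;> decide

end Witness
end JA
namespace JA
namespace Witness

open Finset

def w1' : W := (false, true, true, false)
def u1 : W := (false, true, true, true)
def u2 : W := (true, true, true, false)

/-- Optimal profile for the full agenda. -/
def Qstar : Fin 3 → Finset (Finset W) := ![Jw cA w0, Jw cA w1', Jw cA w2]
/-- Optimal profile for `A1`. -/
def Q1star : Fin 3 → Finset (Finset W) := ![Jw cA1 u1, Jw cA1 w1, Jw cA1 w2]
/-- Optimal profile for `A2`. -/
def Q2star : Fin 3 → Finset (Finset W) := ![Jw cA2 u2, Jw cA2 w1, Jw cA2 w2]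

def J1111 : Finset (Finset W) := {pf, ipq, ipr, qf, rf, sf, isq, isr}
def Jneg1 : Finset (Finset W) := {ipq, ipr, pfᶜ, qfᶜ, rfᶜ}
def Jneg2 : Finset (Finset W) := {isq, isr, qfᶜ, rfᶜ, sfᶜ}

lemma P1_eq : restrict cP cA1 = ![Jw cA1 w0, Jw cA1 w1, Jw cA1 w2] := by
  funext i; fin_cases i <;> decide

lemma P2_eq : restrict cP cA2 = ![Jw cA2 w0, Jw cA2 w1, Jw cA2 w2] := by
  funext i; fin_cases i <;> decide

lemma eT1 : ∀ v : W, v ∈ pf → v ∈ ipq → v ∈ qfᶜ → False := by decide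
lemma eT2 : ∀ v : W, v ∈ pf → v ∈ ipr → v ∈ rfᶜ → False := by decide
lemma eT3 : ∀ v : W, v ∈ sf → v ∈ isq → v ∈ qfᶜ → False := by decide

lemma DH_Qstar : DH cP Qstar = 2 := by decide
lemma maj_Qstar : maj cA Qstar ⊆ J1111 := by decide
lemma DH_Q1star : DH (restrict cP cA1) Q1star = 1 := by decide
lemma maj_Q1star : maj cA1 Q1star ⊆ Jneg1 := by decide
lemma DH_Q2star : DH (restrict cP cA2) Q2star = 1 := by decide
lemma maj_Q2star : maj cA2 Q2star ⊆ Jneg2 := by decide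

lemma cons_J1111 : Consistent cΓ J1111 := ⟨w0, Finset.mem_univ w0, by decide⟩
lemma cons_Jneg1 : Consistent cΓ Jneg1 := ⟨w1, Finset.mem_univ w1, by decide⟩
lemma cons_Jneg2 : Consistent cΓ Jneg2 := ⟨w1, Finset.mem_univ w1, by decide⟩

end Witness
end JA
namespace JA
namespace Witness

open Finset

lemma min_A : ∀ Q : Fin 3 → Finset (Finset W), IsProfile cΓ cA Q →
    Consistent cΓ (maj cA Q) → 2 ≤ DH cP Q := by
  intro Q hQ hcons
  by_contra h
  push_neg at h
  obtain ⟨v, _, hv⟩ := hcons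
  have key : ∀ φ ψ : Finset W, φ ≠ ψ → Ncount Q φ < Ncount cP φ →
      Ncount cP ψ ≤ Ncount Q ψ := by
    intro φ ψ hne h1
    by_contra h2
    push_neg at h2
    have := two_le_DH_of_two_decrease hne h1 h2
    omega
  have hK : ∀ φ : Finset W, φ ∈ cA → 2 ≤ Ncount Q φ → v ∈ φ := by
    intro φ h1 h2
    exact hv φ (Finset.mem_filter.mpr ⟨h1, by omega⟩)
  have npf : Ncount cP pf = 2 := by decide
  have nipq : Ncount cP ipq = 2 := by decide
  have nipr : Ncount cP ipr = 2 := by decide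
  have nqc : Ncount cP qfᶜ = 2 := by decide
  have nrc : Ncount cP rfᶜ = 2 := by decide
  have nsf : Ncount cP sf = 2 := by decide
  have nisq : Ncount cP isq = 2 := by decide
  by_cases hq : 2 ≤ Ncount Q qfᶜ
  · by_cases hp : 2 ≤ Ncount Q pf
    · by_cases hi : 2 ≤ Ncount Q ipq
      · exact eT1 v (hK pf (by decide) hp) (hK ipq (by decide) hi) (hK qfᶜ (by decide) hq)
      · have h1 : 2 ≤ Ncount Q sf := nsf ▸ key ipq sf (by decide) (by omega)
        have h2 : 2 ≤ Ncount Q isq := nisq ▸ key ipq isq (by decide) (by omega)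
        exact eT3 v (hK sf (by decide) h1) (hK isq (by decide) h2) (hK qfᶜ (by decide) hq)
    · have h1 : 2 ≤ Ncount Q sf := nsf ▸ key pf sf (by decide) (by omega)
      have h2 : 2 ≤ Ncount Q isq := nisq ▸ key pf isq (by decide) (by omega)
      exact eT3 v (hK sf (by decide) h1) (hK isq (by decide) h2) (hK qfᶜ (by decide) hq)
  · have h1 : 2 ≤ Ncount Q pf := npf ▸ key qfᶜ pf (by decide) (by omega)
    have h2 : 2 ≤ Ncount Q ipr := nipr ▸ key qfᶜ ipr (by decide) (by omega)
    have h3 : 2 ≤ Ncount Q rfᶜ := nrc ▸ key qfᶜ rfᶜ (by decide) (by omega)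
    exact eT2 v (hK pf (by decide) h1) (hK ipr (by decide) h2) (hK rfᶜ (by decide) h3)

lemma J1111_mem : J1111 ∈ fullH cΓ cA cP := by
  refine ⟨?_, Qstar, ?_, consistent_mono maj_Qstar cons_J1111, ?_, maj_Qstar⟩
  · rw [show J1111 = Jw cA w0 by decide]
    exact Jw_mem_CCJ hclA w0
  · intro i
    fin_cases i <;> exact Jw_mem_CCJ hclA _
  · intro Q' h1 h2
    rw [DH_Qstar]
    exact min_A Q' h1 h2

end Witness
end JA
namespace JA
namespace Witness

open Finset

lemma eT4 : ∀ v : W, v ∈ sf → v ∈ isr → v ∈ rfᶜ → False := by decide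

set_option synthInstance.maxHeartbeats 1000000 in
set_option synthInstance.maxSize 2048 in
lemma final1aux : ∀ v : W, ¬(v ∈ pfᶜ ∧ v ∈ ipq ∧ v ∈ ipr ∧ v ∈ qfᶜ ∧ v ∈ rfᶜ) ∨
    cA1.filter (fun φ => v ∈ φ) = Jneg1 := by decide

lemma final1 (v : W) (h1 : v ∈ pfᶜ) (h2 : v ∈ ipq) (h3 : v ∈ ipr) (h4 : v ∈ qfᶜ)
    (h5 : v ∈ rfᶜ) : cA1.filter (fun φ => v ∈ φ) = Jneg1 :=
  (final1aux v).resolve_left (fun hc => hc ⟨h1, h2, h3, h4, h5⟩)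

set_option synthInstance.maxHeartbeats 1000000 in
set_option synthInstance.maxSize 2048 in
lemma final2aux : ∀ v : W, ¬(v ∈ sfᶜ ∧ v ∈ isq ∧ v ∈ isr ∧ v ∈ qfᶜ ∧ v ∈ rfᶜ) ∨
    cA2.filter (fun φ => v ∈ φ) = Jneg2 := by decide

lemma final2 (v : W) (h1 : v ∈ sfᶜ) (h2 : v ∈ isq) (h3 : v ∈ isr) (h4 : v ∈ qfᶜ)
    (h5 : v ∈ rfᶜ) : cA2.filter (fun φ => v ∈ φ) = Jneg2 :=
  (final2aux v).resolve_left (fun hc => hc ⟨h1, h2, h3, h4, h5⟩)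

lemma profile_P1 : IsProfile cΓ cA1 (restrict cP cA1) := by
  rw [P1_eq]; intro i; fin_cases i <;> exact Jw_mem_CCJ hcl1 _

lemma profile_P2 : IsProfile cΓ cA2 (restrict cP cA2) := by
  rw [P2_eq]; intro i; fin_cases i <;> exact Jw_mem_CCJ hcl2 _

lemma profile_Q1star : IsProfile cΓ cA1 Q1star := by
  intro i; fin_cases i <;> exact Jw_mem_CCJ hcl1 _

lemma profile_Q2star : IsProfile cΓ cA2 Q2star := by
  intro i; fin_cases i <;> exact Jw_mem_CCJ hcl2 _

lemma F1_upper : ∀ J ∈ fullH cΓ cA1 (restrict cP cA1), J = Jneg1 := by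
  intro J hJ
  obtain ⟨hJccj, Q, hQprof, hQcons, hQmin, hQmaj⟩ := hJ
  have hle : DH (restrict cP cA1) Q ≤ 1 :=
    DH_Q1star ▸ hQmin Q1star profile_Q1star (consistent_mono maj_Q1star cons_Jneg1)
  obtain ⟨v, _, hv⟩ := hQcons
  have hK : ∀ φ : Finset W, φ ∈ cA1 → 2 ≤ Ncount Q φ → v ∈ φ := by
    intro φ h1 h2
    exact hv φ (Finset.mem_filter.mpr ⟨h1, by omega⟩)
  have hne0 : DH (restrict cP cA1) Q ≠ 0 := by
    intro h0
    have hsub : ∀ i, restrict cP cA1 i ⊆ Q i := by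
      intro i
      rw [← Finset.sdiff_eq_empty_iff_subset, ← Finset.card_eq_zero]
      have h2 : (restrict cP cA1 i \ Q i).card ≤ DH (restrict cP cA1) Q := by
        unfold DH
        exact Finset.single_le_sum (f := fun k => (restrict cP cA1 k \ Q k).card)
          (fun _ _ => Nat.zero_le _) (Finset.mem_univ i)
      omega
    have mono := Ncount_le_of_sub hsub
    have h1 := mono pf
    have h2 := mono ipq
    have h3 := mono qfᶜ
    have e1 : Ncount (restrict cP cA1) pf = 2 := by decide
    have e2 : Ncount (restrict cP cA1) ipq = 2 := by decide
    have e3 : Ncount (restrict cP cA1) qfᶜ = 2 := by decide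
    exact absurd trivial fun _ => eT1 v (hK pf (by decide) (by omega)) (hK ipq (by decide) (by omega))
      (hK qfᶜ (by decide) (by omega))
  have hdh : DH (restrict cP cA1) Q = 1 := by omega
  obtain ⟨i0, φ0, hmem, hnot, heq, hiff⟩ := one_flip profile_P1 hQprof hdh
  have hiffall : ∀ ψ, ψ ≠ φ0 → ψ ≠ φ0ᶜ → ∀ i, ψ ∈ Q i ↔ ψ ∈ restrict cP cA1 i := by
    intro ψ h1 h2 i
    by_cases hi : i = i0
    · subst hi; exact hiff ψ h1 h2
    · rw [heq i hi]
  have hKun : ∀ ψ, ψ ≠ φ0 → ψ ≠ φ0ᶜ → Ncount (restrict cP cA1) ψ = 2 → 2 ≤ Ncount Q ψ := by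
    intro ψ h1 h2 h3
    rw [Ncount_congr (hiffall ψ h1 h2)]
    omega
  have hφ0A : φ0 ∈ cA1 := (profile_P1 i0).1 hmem
  have hφ0A' : φ0 = pf ∨ φ0 = ipq ∨ φ0 = ipr ∨ φ0 = qf ∨ φ0 = rf ∨
      φ0 = pfᶜ ∨ φ0 = ipqᶜ ∨ φ0 = iprᶜ ∨ φ0 = qfᶜ ∨ φ0 = rfᶜ := by
    simpa [cA1] using hφ0A
  rcases hφ0A' with rfl | rfl | rfl | rfl | rfl | rfl | rfl | rfl | rfl | rfl
  · -- φ0 = pf : the real case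
    fin_cases i0
    · -- i0 = 0
      have hpfc0 : pfᶜ ∈ Q 0 := by
        rcases (hQprof 0).2.1 pf (by decide) with h | h
        · exact absurd h hnot
        · exact h
      have hpfc1 : pfᶜ ∈ Q 1 := by
        rw [heq 1 (by decide)]; decide
      have hKpfc : 2 ≤ Ncount Q pfᶜ :=
        two_le_Ncount (show (0 : Fin 3) ≠ 1 by decide) hpfc0 hpfc1
      have m1 : pfᶜ ∈ J := hQmaj (Finset.mem_filter.mpr ⟨by decide, by omega⟩)
      have m2 : ipq ∈ J := hQmaj (Finset.mem_filter.mpr ⟨by decide,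
        by have := hKun ipq (by decide) (by decide) (by decide); omega⟩)
      have m3 : ipr ∈ J := hQmaj (Finset.mem_filter.mpr ⟨by decide,
        by have := hKun ipr (by decide) (by decide) (by decide); omega⟩)
      have m4 : qfᶜ ∈ J := hQmaj (Finset.mem_filter.mpr ⟨by decide,
        by have := hKun qfᶜ (by decide) (by decide) (by decide); omega⟩)
      have m5 : rfᶜ ∈ J := hQmaj (Finset.mem_filter.mpr ⟨by decide,
        by have := hKun rfᶜ (by decide) (by decide) (by decide); omega⟩)
      obtain ⟨hJsub, _, v', _, hv'⟩ := hJccj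
      have hfe : cA1.filter (fun φ => v' ∈ φ) = Jneg1 :=
        final1 v' (hv' _ m1) (hv' _ m2) (hv' _ m3) (hv' _ m4) (hv' _ m5)
      apply Finset.Subset.antisymm
      · intro φ hφ
        rw [← hfe]
        exact Finset.mem_filter.mpr ⟨hJsub hφ, hv' φ hφ⟩
      · intro φ hφ
        have : φ = ipq ∨ φ = ipr ∨ φ = pfᶜ ∨ φ = qfᶜ ∨ φ = rfᶜ := by simpa [Jneg1] using hφ
        rcases this with rfl | rfl | rfl | rfl | rfl
        exacts [m2, m3, m1, m4, m5]
    · exact absurd hmem (by decide)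
    · -- i0 = 2 : flipped agent 3 would be inconsistent
      have hipqc : ipqᶜ ∈ Q 2 := (hiff ipqᶜ (by decide) (by decide)).mpr (by decide)
      have hpfc : pfᶜ ∈ Q 2 := by
        rcases (hQprof 2).2.1 pf (by decide) with h | h
        · exact absurd h hnot
        · exact h
      obtain ⟨_, _, w, _, hw⟩ := hQprof 2
      exact ((by decide : ∀ w : W, ¬(w ∈ ipqᶜ ∧ w ∈ pfᶜ)) w ⟨hw _ hipqc, hw _ hpfc⟩).elim
  · -- φ0 = ipq
    exact absurd trivial fun _ => eT2 v (hK pf (by decide) (hKun pf (by decide) (by decide) (by decide)))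
      (hK ipr (by decide) (hKun ipr (by decide) (by decide) (by decide)))
      (hK rfᶜ (by decide) (hKun rfᶜ (by decide) (by decide) (by decide)))
  · -- φ0 = ipr
    exact absurd trivial fun _ => eT1 v (hK pf (by decide) (hKun pf (by decide) (by decide) (by decide)))
      (hK ipq (by decide) (hKun ipq (by decide) (by decide) (by decide)))
      (hK qfᶜ (by decide) (hKun qfᶜ (by decide) (by decide) (by decide)))
  · -- φ0 = qf
    exact absurd trivial fun _ => eT2 v (hK pf (by decide) (hKun pf (by decide) (by decide) (by decide)))
      (hK ipr (by decide) (hKun ipr (by decide) (by decide) (by decide)))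
      (hK rfᶜ (by decide) (hKun rfᶜ (by decide) (by decide) (by decide)))
  · -- φ0 = rf
    exact absurd trivial fun _ => eT1 v (hK pf (by decide) (hKun pf (by decide) (by decide) (by decide)))
      (hK ipq (by decide) (hKun ipq (by decide) (by decide) (by decide)))
      (hK qfᶜ (by decide) (hKun qfᶜ (by decide) (by decide) (by decide)))
  · -- φ0 = pfᶜ
    fin_cases i0
    · exact absurd hmem (by decide)
    · -- i0 = 1
      have hpf1 : pf ∈ Q 1 := by
        rcases (hQprof 1).2.1 pf (by decide) with h | h
        · exact h
        · exact absurd h hnot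
      have hpf0 : pf ∈ Q 0 := by
        rw [heq 0 (by decide)]; decide
      have hKpf : 2 ≤ Ncount Q pf :=
        two_le_Ncount (show (0 : Fin 3) ≠ 1 by decide) hpf0 hpf1
      exact absurd trivial fun _ => eT1 v (hK pf (by decide) hKpf)
        (hK ipq (by decide) (hKun ipq (by decide) (by decide) (by decide)))
        (hK qfᶜ (by decide) (hKun qfᶜ (by decide) (by decide) (by decide)))
    · exact absurd hmem (by decide)
  · -- φ0 = ipqᶜ
    exact absurd trivial fun _ => eT2 v (hK pf (by decide) (hKun pf (by decide) (by decide) (by decide)))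
      (hK ipr (by decide) (hKun ipr (by decide) (by decide) (by decide)))
      (hK rfᶜ (by decide) (hKun rfᶜ (by decide) (by decide) (by decide)))
  · -- φ0 = iprᶜ
    exact absurd trivial fun _ => eT1 v (hK pf (by decide) (hKun pf (by decide) (by decide) (by decide)))
      (hK ipq (by decide) (hKun ipq (by decide) (by decide) (by decide)))
      (hK qfᶜ (by decide) (hKun qfᶜ (by decide) (by decide) (by decide)))
  · -- φ0 = qfᶜ
    exact absurd trivial fun _ => eT2 v (hK pf (by decide) (hKun pf (by decide) (by decide) (by decide)))
      (hK ipr (by decide) (hKun ipr (by decide) (by decide) (by decide)))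
      (hK rfᶜ (by decide) (hKun rfᶜ (by decide) (by decide) (by decide)))
  · -- φ0 = rfᶜ
    exact absurd trivial fun _ => eT1 v (hK pf (by decide) (hKun pf (by decide) (by decide) (by decide)))
      (hK ipq (by decide) (hKun ipq (by decide) (by decide) (by decide)))
      (hK qfᶜ (by decide) (hKun qfᶜ (by decide) (by decide) (by decide)))

end Witness
end JA
namespace JA
namespace Witness

open Finset

lemma F2_upper : ∀ J ∈ fullH cΓ cA2 (restrict cP cA2), J = Jneg2 := by
  intro J hJ
  obtain ⟨hJccj, Q, hQprof, hQcons, hQmin, hQmaj⟩ := hJ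
  have hle : DH (restrict cP cA2) Q ≤ 1 :=
    DH_Q2star ▸ hQmin Q2star profile_Q2star (consistent_mono maj_Q2star cons_Jneg2)
  obtain ⟨v, _, hv⟩ := hQcons
  have hK : ∀ φ : Finset W, φ ∈ cA2 → 2 ≤ Ncount Q φ → v ∈ φ := by
    intro φ h1 h2
    exact hv φ (Finset.mem_filter.mpr ⟨h1, by omega⟩)
  have hne0 : DH (restrict cP cA2) Q ≠ 0 := by
    intro h0
    have hsub : ∀ i, restrict cP cA2 i ⊆ Q i := by
      intro i
      rw [← Finset.sdiff_eq_empty_iff_subset, ← Finset.card_eq_zero]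
      have h2 : (restrict cP cA2 i \ Q i).card ≤ DH (restrict cP cA2) Q := by
        unfold DH
        exact Finset.single_le_sum (f := fun k => (restrict cP cA2 k \ Q k).card)
          (fun _ _ => Nat.zero_le _) (Finset.mem_univ i)
      omega
    have mono := Ncount_le_of_sub hsub
    have h1 := mono sf
    have h2 := mono isq
    have h3 := mono qfᶜ
    have e1 : Ncount (restrict cP cA2) sf = 2 := by decide
    have e2 : Ncount (restrict cP cA2) isq = 2 := by decide
    have e3 : Ncount (restrict cP cA2) qfᶜ = 2 := by decide
    exact eT3 v (hK sf (by decide) (by omega)) (hK isq (by decide) (by omega))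
      (hK qfᶜ (by decide) (by omega))
  have hdh : DH (restrict cP cA2) Q = 1 := by omega
  obtain ⟨i0, φ0, hmem, hnot, heq, hiff⟩ := one_flip profile_P2 hQprof hdh
  have hiffall : ∀ ψ, ψ ≠ φ0 → ψ ≠ φ0ᶜ → ∀ i, ψ ∈ Q i ↔ ψ ∈ restrict cP cA2 i := by
    intro ψ h1 h2 i
    by_cases hi : i = i0
    · subst hi; exact hiff ψ h1 h2
    · rw [heq i hi]
  have hKun : ∀ ψ, ψ ≠ φ0 → ψ ≠ φ0ᶜ → Ncount (restrict cP cA2) ψ = 2 → 2 ≤ Ncount Q ψ := by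
    intro ψ h1 h2 h3
    rw [Ncount_congr (hiffall ψ h1 h2)]
    omega
  have hφ0A : φ0 ∈ cA2 := (profile_P2 i0).1 hmem
  have hφ0A' : φ0 = qf ∨ φ0 = rf ∨ φ0 = sf ∨ φ0 = isq ∨ φ0 = isr ∨
      φ0 = qfᶜ ∨ φ0 = rfᶜ ∨ φ0 = sfᶜ ∨ φ0 = isqᶜ ∨ φ0 = isrᶜ := by
    simpa [cA2] using hφ0A
  rcases hφ0A' with rfl | rfl | rfl | rfl | rfl | rfl | rfl | rfl | rfl | rfl
  · -- φ0 = qf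
    exact absurd trivial fun _ => eT4 v (hK sf (by decide) (hKun sf (by decide) (by decide) (by decide)))
      (hK isr (by decide) (hKun isr (by decide) (by decide) (by decide)))
      (hK rfᶜ (by decide) (hKun rfᶜ (by decide) (by decide) (by decide)))
  · -- φ0 = rf
    exact absurd trivial fun _ => eT3 v (hK sf (by decide) (hKun sf (by decide) (by decide) (by decide)))
      (hK isq (by decide) (hKun isq (by decide) (by decide) (by decide)))
      (hK qfᶜ (by decide) (hKun qfᶜ (by decide) (by decide) (by decide)))
  · -- φ0 = sf : the real case
    fin_cases i0
    · -- i0 = 0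
      have hsfc0 : sfᶜ ∈ Q 0 := by
        rcases (hQprof 0).2.1 sf (by decide) with h | h
        · exact absurd h hnot
        · exact h
      have hsfc1 : sfᶜ ∈ Q 1 := by
        rw [heq 1 (by decide)]; decide
      have hKsfc : 2 ≤ Ncount Q sfᶜ :=
        two_le_Ncount (show (0 : Fin 3) ≠ 1 by decide) hsfc0 hsfc1
      have m1 : sfᶜ ∈ J := hQmaj (Finset.mem_filter.mpr ⟨by decide, by omega⟩)
      have m2 : isq ∈ J := hQmaj (Finset.mem_filter.mpr ⟨by decide,
        by have := hKun isq (by decide) (by decide) (by decide); omega⟩)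
      have m3 : isr ∈ J := hQmaj (Finset.mem_filter.mpr ⟨by decide,
        by have := hKun isr (by decide) (by decide) (by decide); omega⟩)
      have m4 : qfᶜ ∈ J := hQmaj (Finset.mem_filter.mpr ⟨by decide,
        by have := hKun qfᶜ (by decide) (by decide) (by decide); omega⟩)
      have m5 : rfᶜ ∈ J := hQmaj (Finset.mem_filter.mpr ⟨by decide,
        by have := hKun rfᶜ (by decide) (by decide) (by decide); omega⟩)
      obtain ⟨hJsub, _, v', _, hv'⟩ := hJccj
      have hfe : cA2.filter (fun φ => v' ∈ φ) = Jneg2 :=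
        final2 v' (hv' _ m1) (hv' _ m2) (hv' _ m3) (hv' _ m4) (hv' _ m5)
      apply Finset.Subset.antisymm
      · intro φ hφ
        rw [← hfe]
        exact Finset.mem_filter.mpr ⟨hJsub hφ, hv' φ hφ⟩
      · intro φ hφ
        have : φ = isq ∨ φ = isr ∨ φ = qfᶜ ∨ φ = rfᶜ ∨ φ = sfᶜ := by simpa [Jneg2] using hφ
        rcases this with rfl | rfl | rfl | rfl | rfl
        exacts [m2, m3, m4, m5, m1]
    · exact absurd hmem (by decide)
    · -- i0 = 2
      have hisqc : isqᶜ ∈ Q 2 := (hiff isqᶜ (by decide) (by decide)).mpr (by decide)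
      have hsfc : sfᶜ ∈ Q 2 := by
        rcases (hQprof 2).2.1 sf (by decide) with h | h
        · exact absurd h hnot
        · exact h
      obtain ⟨_, _, w, _, hw⟩ := hQprof 2
      exact ((by decide : ∀ w : W, ¬(w ∈ isqᶜ ∧ w ∈ sfᶜ)) w ⟨hw _ hisqc, hw _ hsfc⟩).elim
  · -- φ0 = isq
    exact absurd trivial fun _ => eT4 v (hK sf (by decide) (hKun sf (by decide) (by decide) (by decide)))
      (hK isr (by decide) (hKun isr (by decide) (by decide) (by decide)))
      (hK rfᶜ (by decide) (hKun rfᶜ (by decide) (by decide) (by decide)))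
  · -- φ0 = isr
    exact absurd trivial fun _ => eT3 v (hK sf (by decide) (hKun sf (by decide) (by decide) (by decide)))
      (hK isq (by decide) (hKun isq (by decide) (by decide) (by decide)))
      (hK qfᶜ (by decide) (hKun qfᶜ (by decide) (by decide) (by decide)))
  · -- φ0 = qfᶜ
    exact absurd trivial fun _ => eT4 v (hK sf (by decide) (hKun sf (by decide) (by decide) (by decide)))
      (hK isr (by decide) (hKun isr (by decide) (by decide) (by decide)))
      (hK rfᶜ (by decide) (hKun rfᶜ (by decide) (by decide) (by decide)))
  · -- φ0 = rfᶜ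
    exact absurd trivial fun _ => eT3 v (hK sf (by decide) (hKun sf (by decide) (by decide) (by decide)))
      (hK isq (by decide) (hKun isq (by decide) (by decide) (by decide)))
      (hK qfᶜ (by decide) (hKun qfᶜ (by decide) (by decide) (by decide)))
  · -- φ0 = sfᶜ
    fin_cases i0
    · exact absurd hmem (by decide)
    · -- i0 = 1
      have hsf1 : sf ∈ Q 1 := by
        rcases (hQprof 1).2.1 sf (by decide) with h | h
        · exact h
        · exact absurd h hnot
      have hsf0 : sf ∈ Q 0 := by
        rw [heq 0 (by decide)]; decide
      have hKsf : 2 ≤ Ncount Q sf :=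
        two_le_Ncount (show (0 : Fin 3) ≠ 1 by decide) hsf0 hsf1
      exact absurd trivial fun _ => eT3 v (hK sf (by decide) hKsf)
        (hK isq (by decide) (hKun isq (by decide) (by decide) (by decide)))
        (hK qfᶜ (by decide) (hKun qfᶜ (by decide) (by decide) (by decide)))
    · exact absurd hmem (by decide)
  · -- φ0 = isqᶜ
    exact absurd trivial fun _ => eT4 v (hK sf (by decide) (hKun sf (by decide) (by decide) (by decide)))
      (hK isr (by decide) (hKun isr (by decide) (by decide) (by decide)))
      (hK rfᶜ (by decide) (hKun rfᶜ (by decide) (by decide) (by decide)))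
  · -- φ0 = isrᶜ
    exact absurd trivial fun _ => eT3 v (hK sf (by decide) (hKun sf (by decide) (by decide) (by decide)))
      (hK isq (by decide) (hKun isq (by decide) (by decide) (by decide)))
      (hK qfᶜ (by decide) (hKun qfᶜ (by decide) (by decide) (by decide)))

end Witness
end JA
namespace JA
namespace Witness

open Finset

lemma agendaA : IsAgenda cA := ⟨by decide, by decide⟩
lemma agendaA1 : IsAgenda cA1 := ⟨by decide, by decide⟩
lemma agendaA2 : IsAgenda cA2 := ⟨by decide, by decide⟩

lemma inv1 : ∀ φ ∈ cA1, ∀ p q r s s' : Bool, (((p, q, r, s) : W) ∈ φ ↔ ((p, q, r, s') : W) ∈ φ) := by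
  decide

lemma inv2 : ∀ φ ∈ cA2, ∀ p p' q r s : Bool, (((p, q, r, s) : W) ∈ φ ↔ ((p', q, r, s) : W) ∈ φ) := by
  decide

lemma iod : IOD cΓ cA cA1 cA2 := by
  refine ⟨rfl, agendaA1, agendaA2, ?_⟩
  intro J1 hJ1 J2 hJ2 hagree
  obtain ⟨hs1, hc1, v, _, hv1⟩ := hJ1
  obtain ⟨hs2, hc2, w, _, hw2⟩ := hJ2
  have key : ∀ φ : Finset W, φ ∈ cA1 → φ ∈ cA2 → (v ∈ φ ↔ w ∈ φ) := by
    intro φ h1 h2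
    constructor
    · intro hvφ
      have hφJ1 : φ ∈ J1 := by
        rcases hc1 φ h1 with h | h
        · exact h
        · exact absurd hvφ (by simpa using hv1 _ h)
      have : φ ∈ J2 := (Finset.mem_inter.mp (hagree ▸ Finset.mem_inter.mpr ⟨hφJ1, h2⟩)).1
      exact hw2 _ this
    · intro hwφ
      have hφJ2 : φ ∈ J2 := by
        rcases hc2 φ h2 with h | h
        · exact h
        · exact absurd hwφ (by simpa using hw2 _ h)
      have : φ ∈ J1 := (Finset.mem_inter.mp (hagree.symm ▸ Finset.mem_inter.mpr ⟨hφJ2, h1⟩)).1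
      exact hv1 _ this
  obtain ⟨vp, vq, vr, vs⟩ := v
  obtain ⟨wp, wq, wr, ws⟩ := w
  have hq : vq = wq := by
    have h := key qf (by decide) (by decide)
    simp only [qf, Finset.mem_filter, Finset.mem_univ, true_and] at h
    exact Bool.coe_iff_coe.mp h
  have hr : vr = wr := by
    have h := key rf (by decide) (by decide)
    simp only [rf, Finset.mem_filter, Finset.mem_univ, true_and] at h
    exact Bool.coe_iff_coe.mp h
  subst hq
  subst hr
  refine ⟨?_, ?_, (vp, vq, vr, ws), Finset.mem_univ _, ?_⟩
  · intro φ hφ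
    rcases Finset.mem_union.mp hφ with h | h
    · exact Finset.mem_union.mpr (Or.inl (hs1 h))
    · exact Finset.mem_union.mpr (Or.inr (hs2 h))
  · intro φ hφ
    rcases Finset.mem_union.mp hφ with h | h
    · rcases hc1 φ h with h' | h'
      · exact Or.inl (Finset.mem_union.mpr (Or.inl h'))
      · exact Or.inr (Finset.mem_union.mpr (Or.inl h'))
    · rcases hc2 φ h with h' | h'
      · exact Or.inl (Finset.mem_union.mpr (Or.inr h'))
      · exact Or.inr (Finset.mem_union.mpr (Or.inr h'))
  · intro φ hφ
    rcases Finset.mem_union.mp hφ with h | h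
    · exact (inv1 φ (hs1 h) vp vq vr vs ws).mp (hv1 _ h)
    · exact (inv2 φ (hs2 h) wp vp vq vr ws).mp (hw2 _ h)

lemma profile_cP : IsProfile cΓ cA cP := by
  rw [cP_eq]
  intro i
  fin_cases i <;> exact Jw_mem_CCJ hclA _

end Witness
end JA

namespace JA
namespace Witness

/-- The rule `full_H` does not satisfy overlapping agenda separability,
as witnessed by the agenda with preagendas `[A1] = {p, p→q, p→r, q, r}`,
`[A2] = {q, r, s, s→q, s→r}` and the profile `cP`. -/
theorem fullH_not_oas :
    cΓ.Nonempty ∧ IsAgenda cA ∧ IOD cΓ cA cA1 cA2 ∧ IsProfile cΓ cA cP ∧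
    (∀ J1 ∈ fullH cΓ cA1 (restrict cP cA1), ∀ J2 ∈ fullH cΓ cA2 (restrict cP cA2),
      J1 ∩ cA2 = J2 ∩ cA1) ∧
    fullH cΓ cA cP ≠
      pairUnions (fullH cΓ cA1 (restrict cP cA1)) (fullH cΓ cA2 (restrict cP cA2)) := by
  refine ⟨⟨w0, Finset.mem_univ w0⟩, agendaA, iod, profile_cP, ?_, ?_⟩
  · intro J1 h1 J2 h2
    rw [F1_upper J1 h1, F2_upper J2 h2]
    decide
  · intro h
    have h1 : J1111 ∈ pairUnions (fullH cΓ cA1 (restrict cP cA1))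
        (fullH cΓ cA2 (restrict cP cA2)) := h ▸ J1111_mem
    obtain ⟨Ja, hJa, Jb, hJb, hEq⟩ := h1
    rw [F1_upper Ja hJa, F2_upper Jb hJb] at hEq
    exact (by decide : J1111 ≠ Jneg1 ∪ Jneg2) hEq

end Witness
end JA
end

section
/- The reversal scoring rule R_rev does not satisfy overlapping agenda separability: there exist a constrained agenda (A,Γ), an independent overlapping decomposition {A1,A2} of A, and a profile P over A such that for all J1 ∈ R_rev(P↓A1) and J2 ∈ R_rev(P↓A2) we have J1 ∩ A2 = J2 ∩ A1, yet R_rev(P) ≠ { J1 ∪ J2 : J1 ∈ R_rev(P↓A1), J2 ∈ R_rev(P↓A2) }. -/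
namespace JA

variable {V : Type*} [Fintype V] [DecidableEq V]

/-- Reversal score `s_rev(J,φ)`: the minimal Hamming distance `|J \ J'|` from `J` to a
complete `Γ`-consistent judgment set `J'` rejecting `φ` (i.e. containing `¬φ`). -/
noncomputable def srev (Γ : Finset V) (A : Finset (Finset V)) (J : Finset (Finset V))
    (φ : Finset V) : ℕ :=
  sInf {k | ∃ J' ∈ CCJ Γ A, φᶜ ∈ J' ∧ (J \ J').card = k}

/-- Total reversal score of a judgment set `J` for the profile `P`. -/
noncomputable def revScore (Γ : Finset V) (A : Finset (Finset V)) {n : ℕ}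
    (P : Fin n → Finset (Finset V)) (J : Finset (Finset V)) : ℕ :=
  ∑ i, ∑ φ ∈ J, srev Γ A (P i) φ

/-- The reversal scoring rule `R_rev`: it selects the complete `Γ`-consistent judgment sets
maximizing the total reversal score. -/
noncomputable def Rrev (Γ : Finset V) (A : Finset (Finset V)) {n : ℕ}
    (P : Fin n → Finset (Finset V)) : Set (Finset (Finset V)) :=
  {J | J ∈ CCJ Γ A ∧ ∀ J' ∈ CCJ Γ A, revScore Γ A P J' ≤ revScore Γ A P J}

end JA


namespace JA

variable {V : Type*} [Fintype V] [DecidableEq V]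

instance decConsistent (Γ : Finset V) (J : Finset (Finset V)) : Decidable (Consistent Γ J) :=
  decidable_of_iff (∃ v ∈ Γ, ∀ φ ∈ J, v ∈ φ) Iff.rfl

instance decCCJ (Γ : Finset V) (A : Finset (Finset V)) :
    DecidablePred (· ∈ CCJ Γ A) := fun J =>
  decidable_of_iff (J ⊆ A ∧ (∀ φ ∈ A, φ ∈ J ∨ φᶜ ∈ J) ∧ Consistent Γ J) Iff.rfl

instance decIsAgenda (A : Finset (Finset V)) : Decidable (IsAgenda A) :=
  decidable_of_iff ((∀ φ ∈ A, φᶜ ∈ A) ∧ ∀ φ ∈ A, φ.Nonempty ∧ φ ≠ Finset.univ) Iff.rfl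

/-- The key symbolic characterization: a complete `Γ`-consistent judgment set over a
negation-closed agenda `A` is exactly `A.filter (v ∈ ·)` for some valuation `v ∈ Γ`. -/
lemma mem_CCJ_iff (Γ : Finset V) (A : Finset (Finset V)) (hA : ∀ φ ∈ A, φᶜ ∈ A)
    (J : Finset (Finset V)) :
    J ∈ CCJ Γ A ↔ J ∈ Γ.image (fun v => A.filter (fun φ => v ∈ φ)) := by
  constructor
  · rintro ⟨hsub, hcomp, v, hv, hval⟩
    refine Finset.mem_image.2 ⟨v, hv, ?_⟩
    ext φ
    simp only [Finset.mem_filter]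
    constructor
    · rintro ⟨hφA, hvφ⟩
      rcases hcomp φ hφA with h | h
      · exact h
      · exact absurd (hval _ h) (by simp [hvφ])
    · intro hφ
      exact ⟨hsub hφ, hval φ hφ⟩
  · intro h
    obtain ⟨v, hv, rfl⟩ := Finset.mem_image.1 h
    refine ⟨Finset.filter_subset _ _, ?_, v, hv, ?_⟩
    · intro φ hφ
      by_cases h : v ∈ φ
      · exact Or.inl (Finset.mem_filter.2 ⟨hφ, h⟩)
      · exact Or.inr (Finset.mem_filter.2 ⟨hA φ hφ, by simp [h]⟩)
    · intro φ hφ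
      exact (Finset.mem_filter.1 hφ).2

lemma sInf_coe_finset (T : Finset ℕ) : sInf (↑T : Set ℕ) = T.min.getD 0 := by
  rcases T.eq_empty_or_nonempty with rfl | h
  · simp only [Finset.coe_empty, Nat.sInf_empty, Finset.min_empty]
    rfl
  · have h1 : sInf (↑T : Set ℕ) ≤ T.min' h := Nat.sInf_le (T.min'_mem h)
    have h2 : T.min' h ≤ sInf (↑T : Set ℕ) :=
      T.min'_le _ (Nat.sInf_mem ((Finset.coe_nonempty).2 h))
    rw [← Finset.coe_min' h, ← le_antisymm h1 h2]
    rfl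

/-- `srev` computed from an explicit enumeration `L` of `CCJ Γ A`. -/
def srevL (L : Finset (Finset (Finset V))) (J : Finset (Finset V)) (φ : Finset V) : ℕ :=
  (((L.filter fun J' => φᶜ ∈ J').image fun J' => (J \ J').card).min).getD 0

lemma srev_eq_L {Γ : Finset V} {A : Finset (Finset V)} {L : Finset (Finset (Finset V))}
    (hL : ∀ J, J ∈ CCJ Γ A ↔ J ∈ L) (J : Finset (Finset V)) (φ : Finset V) :
    srev Γ A J φ = srevL L J φ := by
  unfold srev srevL
  rw [← sInf_coe_finset]
  congr 1
  ext k
  simp only [Finset.coe_image, Set.mem_image, Finset.mem_coe, Finset.mem_filter,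
    Set.mem_setOf_eq]
  constructor
  · rintro ⟨J', hJ', hφ, rfl⟩
    exact ⟨J', ⟨(hL J').1 hJ', hφ⟩, rfl⟩
  · rintro ⟨J', ⟨hJ', hφ⟩, rfl⟩
    exact ⟨J', (hL J').2 hJ', hφ, rfl⟩

/-- `revScore` computed from an explicit enumeration `L` of `CCJ Γ A`. -/
def scoreL (L : Finset (Finset (Finset V))) {n : ℕ} (P : Fin n → Finset (Finset V))
    (J : Finset (Finset V)) : ℕ :=
  ∑ i, ∑ φ ∈ J, srevL L (P i) φ

lemma revScore_eq_L {Γ : Finset V} {A : Finset (Finset V)} {L : Finset (Finset (Finset V))}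
    (hL : ∀ J, J ∈ CCJ Γ A ↔ J ∈ L) {n : ℕ} (P : Fin n → Finset (Finset V))
    (J : Finset (Finset V)) : revScore Γ A P J = scoreL L P J := by
  unfold revScore scoreL
  simp only [srev_eq_L hL]

lemma mem_Rrev_iff_L {Γ : Finset V} {A : Finset (Finset V)} {L : Finset (Finset (Finset V))}
    (hL : ∀ J, J ∈ CCJ Γ A ↔ J ∈ L) {n : ℕ} (P : Fin n → Finset (Finset V))
    (J : Finset (Finset V)) :
    J ∈ Rrev Γ A P ↔ J ∈ L ∧ ∀ J' ∈ L, scoreL L P J' ≤ scoreL L P J := by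
  unfold Rrev
  simp only [Set.mem_setOf_eq, revScore_eq_L hL, hL]

/-- concrete data for the counterexample -/
def cΓ : Finset (Fin 4) := {0, 1, 3}
def fa : Finset (Fin 4) := {0}
def fb : Finset (Fin 4) := {0, 2}
def fc : Finset (Fin 4) := {0, 2, 3}
def fa' : Finset (Fin 4) := {1, 2, 3}
def fb' : Finset (Fin 4) := {1, 3}
def fc' : Finset (Fin 4) := {1}
def cA : Finset (Finset (Fin 4)) := {fa, fb, fc, fa', fb', fc'}
def cA1 : Finset (Finset (Fin 4)) := {fa, fc, fa', fc'}
def cA2 : Finset (Finset (Fin 4)) := {fa, fb, fa', fb'}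
def cP : Fin 3 → Finset (Finset (Fin 4)) := ![{fa, fb, fc}, {fa', fb', fc'}, {fa', fb', fc'}]
def cLA : Finset (Finset (Finset (Fin 4))) := {{fa, fb, fc}, {fa', fb', fc}, {fa', fb', fc'}}
def cLA1 : Finset (Finset (Finset (Fin 4))) := {{fa, fc}, {fa', fc}, {fa', fc'}}
def cLA2 : Finset (Finset (Finset (Fin 4))) := {{fa, fb}, {fa', fb'}}

set_option maxRecDepth 8000
set_option maxHeartbeats 1000000

lemma hclosA : ∀ φ ∈ cA, φᶜ ∈ cA := by decide
lemma hclosA1 : ∀ φ ∈ cA1, φᶜ ∈ cA1 := by decide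
lemma hclosA2 : ∀ φ ∈ cA2, φᶜ ∈ cA2 := by decide

lemma hLA : ∀ J, J ∈ CCJ cΓ cA ↔ J ∈ cLA := by
  intro J
  rw [mem_CCJ_iff cΓ cA hclosA J]
  have h : cΓ.image (fun v => cA.filter (fun φ => v ∈ φ)) = cLA := by decide
  rw [h]

lemma hLA1 : ∀ J, J ∈ CCJ cΓ cA1 ↔ J ∈ cLA1 := by
  intro J
  rw [mem_CCJ_iff cΓ cA1 hclosA1 J]
  have h : cΓ.image (fun v => cA1.filter (fun φ => v ∈ φ)) = cLA1 := by decide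
  rw [h]

lemma hLA2 : ∀ J, J ∈ CCJ cΓ cA2 ↔ J ∈ cLA2 := by
  intro J
  rw [mem_CCJ_iff cΓ cA2 hclosA2 J]
  have h : cΓ.image (fun v => cA2.filter (fun φ => v ∈ φ)) = cLA2 := by decide
  rw [h]

/-- The restricted profiles, as explicit tuples. -/
def cQ1 : Fin 3 → Finset (Finset (Fin 4)) := ![{fa, fc}, {fa', fc'}, {fa', fc'}]
def cQ2 : Fin 3 → Finset (Finset (Fin 4)) := ![{fa, fb}, {fa', fb'}, {fa', fb'}]

lemma hres1 : restrict cP cA1 = cQ1 := by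
  funext i
  fin_cases i <;> decide

lemma hres2 : restrict cP cA2 = cQ2 := by
  funext i
  fin_cases i <;> decide

/-- Explicit values of the total reversal scores. -/
lemma sA_1 : scoreL cLA cP {fa, fb, fc} = 7 := by decide
lemma sA_2 : scoreL cLA cP {fa', fb', fc} = 15 := by decide
lemma sA_3 : scoreL cLA cP {fa', fb', fc'} = 14 := by decide
lemma sA1_1 : scoreL cLA1 cQ1 {fa, fc} = 3 := by decide
lemma sA1_2 : scoreL cLA1 cQ1 {fa', fc} = 6 := by decide
lemma sA1_3 : scoreL cLA1 cQ1 {fa', fc'} = 6 := by decide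
lemma sA2_1 : scoreL cLA2 cQ2 {fa, fb} = 4 := by decide
lemma sA2_2 : scoreL cLA2 cQ2 {fa', fb'} = 8 := by decide

end JA

namespace JA

set_option maxRecDepth 8000
set_option maxHeartbeats 1000000

/-- The reversal scoring rule `R_rev` does not satisfy overlapping agenda separability:
there exist a constrained agenda, an independent overlapping decomposition `{A1, A2}` of it,
and a profile `P` such that all outputs on the two sub-agendas agree on the overlap, yet
the output on the whole agenda is not the set of pairwise unions. -/
theorem rrev_not_oas :
    ∃ (V : Type) (_ : Fintype V) (_ : DecidableEq V) (Γ : Finset V)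
      (A A1 A2 : Finset (Finset V)) (n : ℕ) (P : Fin n → Finset (Finset V)),
      Γ.Nonempty ∧ IsAgenda A ∧ IOD Γ A A1 A2 ∧ IsProfile Γ A P ∧
      (∀ J1 ∈ Rrev Γ A1 (restrict P A1), ∀ J2 ∈ Rrev Γ A2 (restrict P A2),
        J1 ∩ A2 = J2 ∩ A1) ∧
      Rrev Γ A P ≠
        pairUnions (Rrev Γ A1 (restrict P A1)) (Rrev Γ A2 (restrict P A2)) := by
  refine ⟨Fin 4, inferInstance, inferInstance, cΓ, cA, cA1, cA2, 3, cP,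
    by decide, by decide, ⟨by decide, by decide, by decide, ?_⟩, ?_, ?_, ?_⟩
  · -- IOD gluing condition
    intro J1 hJ1 J2 hJ2 h
    rw [hLA1] at hJ1
    rw [hLA2] at hJ2
    rw [hLA]
    simp only [cLA1, Finset.mem_insert, Finset.mem_singleton] at hJ1
    simp only [cLA2, Finset.mem_insert, Finset.mem_singleton] at hJ2
    rcases hJ1 with rfl | rfl | rfl <;> rcases hJ2 with rfl | rfl <;>
      first
      | exact absurd h (by decide)
      | decide
  · -- profile
    intro i
    rw [hLA]
    fin_cases i <;> decide
  · -- agreement on the overlap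
    intro J1 hJ1 J2 hJ2
    rw [mem_Rrev_iff_L hLA1, hres1] at hJ1
    rw [mem_Rrev_iff_L hLA2, hres2] at hJ2
    obtain ⟨hm1, hs1⟩ := hJ1
    obtain ⟨hm2, hs2⟩ := hJ2
    simp only [cLA1, Finset.mem_insert, Finset.mem_singleton] at hm1
    simp only [cLA2, Finset.mem_insert, Finset.mem_singleton] at hm2
    have hx2 : J2 = {fa', fb'} := by
      rcases hm2 with rfl | rfl
      · have h := hs2 {fa', fb'} (by decide)
        rw [sA2_2, sA2_1] at h
        exact absurd h (by decide)
      · rfl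
    subst hx2
    rcases hm1 with rfl | rfl | rfl
    · have h := hs1 {fa', fc} (by decide)
      rw [sA1_2, sA1_1] at h
      exact absurd h (by decide)
    · decide
    · decide
  · -- the outcomes differ
    intro h
    have hJ1b : ({fa', fc'} : Finset (Finset (Fin 4))) ∈ Rrev cΓ cA1 (restrict cP cA1) := by
      rw [mem_Rrev_iff_L hLA1, hres1]
      refine ⟨by decide, ?_⟩
      intro J' hJ'
      simp only [cLA1, Finset.mem_insert, Finset.mem_singleton] at hJ'
      rcases hJ' with rfl | rfl | rfl
      · rw [sA1_1, sA1_3] <;> decide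
      · rw [sA1_2, sA1_3] <;> decide
      · exact le_rfl
    have hJ2w : ({fa', fb'} : Finset (Finset (Fin 4))) ∈ Rrev cΓ cA2 (restrict cP cA2) := by
      rw [mem_Rrev_iff_L hLA2, hres2]
      refine ⟨by decide, ?_⟩
      intro J' hJ'
      simp only [cLA2, Finset.mem_insert, Finset.mem_singleton] at hJ'
      rcases hJ' with rfl | rfl
      · rw [sA2_1, sA2_2] <;> decide
      · exact le_rfl
    have hmem : ({fa', fb', fc'} : Finset (Finset (Fin 4))) ∈
        pairUnions (Rrev cΓ cA1 (restrict cP cA1)) (Rrev cΓ cA2 (restrict cP cA2)) :=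
      ⟨_, hJ1b, _, hJ2w, by decide⟩
    rw [← h] at hmem
    have hle := ((mem_Rrev_iff_L hLA cP _).1 hmem).2 {fa', fb', fc} (by decide)
    rw [sA_2, sA_3] at hle
    exact absurd hle (by decide)

end JA
end

section
/- Let C = {x1,…,xm} with m ≥ 3 and let {A1,A2} be an independent overlapping decomposition of the preference agenda A_C (with constraint Γ_C). Then for all pairwise distinct alternatives x_i, x_j, x_k in C, the issue concerning the pair {x_i,x_j} and the issue concerning the pair {x_i,x_k} are either both contained in A1 or both contained in A2. -/
namespace JA
namespace Pref

/-- Valuations of the atoms `x_i P x_j` (only the coordinates with `i < j` are used). -/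
abbrev Val (m : ℕ) := Fin m → Fin m → Bool

/-- The formula (model set) of the atom `x_i P x_j` (meant for `i < j`). -/
def atomF (m : ℕ) (i j : Fin m) : Finset (Val m) :=
  Finset.univ.filter fun v => v i j = true

/-- `prefB v i j` holds iff `x_i` is preferred to `x_j` under the valuation `v`
(for `i ≠ j`): `x_j P x_i` abbreviates `¬ x_i P x_j`. -/
def prefB {m : ℕ} (v : Val m) (i j : Fin m) : Bool :=
  if i < j then v i j else !(v j i)

/-- The constraint `Γ_C`: the conjunction of all transitivity clauses, so its models
correspond exactly to the linear orders on the `m` alternatives. -/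
def ΓC (m : ℕ) : Finset (Val m) :=
  Finset.univ.filter fun v => ∀ i j k : Fin m, i ≠ j → j ≠ k → i ≠ k →
    prefB v i j = true → prefB v j k = true → prefB v i k = true

/-- The preference agenda over `m` alternatives: all atoms `x_i P x_j` for `i < j`
together with their negations. -/
def prefAgenda (m : ℕ) : Finset (Finset (Val m)) :=
  (Finset.univ.filter fun ij : Fin m × Fin m => ij.1 < ij.2).biUnion
    fun ij => {atomF m ij.1 ij.2, (atomF m ij.1 ij.2)ᶜ}

/-- The issue concerning the pair `{x_i, x_j}` (for `i ≠ j`): the atom on the ordered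
pair together with its negation. -/
def issue (m : ℕ) (i j : Fin m) : Finset (Finset (Val m)) :=
  {atomF m (min i j) (max i j), (atomF m (min i j) (max i j))ᶜ}

end Pref
end JA

namespace JA

lemma IOD_symm {V : Type*} [Fintype V] [DecidableEq V] {Γ : Finset V}
    {A A1 A2 : Finset (Finset V)} (h : IOD Γ A A1 A2) : IOD Γ A A2 A1 := by
  obtain ⟨hu, h1, h2, hg⟩ := h
  refine ⟨by rw [Finset.union_comm]; exact hu, h2, h1, ?_⟩
  intro J2 hJ2 J1 hJ1 heq
  rw [Finset.union_comm]
  exact hg J1 hJ1 J2 hJ2 heq.symm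

lemma JS_mem_CCJ {V : Type*} [Fintype V] [DecidableEq V] {Γ : Finset V}
    {B : Finset (Finset V)} (hB : IsAgenda B) {v : V} (hv : v ∈ Γ) :
    B.filter (fun φ => v ∈ φ) ∈ CCJ Γ B := by
  refine ⟨Finset.filter_subset _ _, ?_, v, hv, ?_⟩
  · intro φ hφ
    by_cases h : v ∈ φ
    · exact Or.inl (Finset.mem_filter.mpr ⟨hφ, h⟩)
    · exact Or.inr (Finset.mem_filter.mpr ⟨hB.1 φ hφ, Finset.mem_compl.mpr h⟩)
  · intro φ hφ; exact (Finset.mem_filter.mp hφ).2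

namespace Pref

variable {m : ℕ}

lemma mem_atomF {v : Val m} {i j : Fin m} : v ∈ atomF m i j ↔ v i j = true := by
  simp [atomF]

lemma mem_atomF_compl {v : Val m} {i j : Fin m} :
    v ∈ (atomF m i j)ᶜ ↔ ¬ (v i j = true) := by
  simp [atomF]

/-- Formula expressing `x_i P x_j` for arbitrary distinct `i j`. -/
def prefF (m : ℕ) (i j : Fin m) : Finset (Val m) :=
  if i < j then atomF m i j else (atomF m j i)ᶜ

lemma mem_prefF {v : Val m} {i j : Fin m} (h : i ≠ j) :
    v ∈ prefF m i j ↔ prefB v i j = true := by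
  unfold prefF prefB
  rcases lt_or_gt_of_ne h with h' | h'
  · rw [if_pos h', if_pos h', mem_atomF]
  · rw [if_neg (not_lt.mpr h'.le), if_neg (not_lt.mpr h'.le), mem_atomF_compl]
    simp

lemma prefB_swap {v : Val m} {i j : Fin m} (h : i ≠ j) :
    prefB v i j = !(prefB v j i) := by
  unfold prefB
  rcases lt_or_gt_of_ne h with h' | h'
  · rw [if_pos h', if_neg (not_lt.mpr h'.le), Bool.not_not]
  · rw [if_neg (not_lt.mpr h'.le), if_pos h']

lemma issue_comm (i j : Fin m) : issue m i j = issue m j i := by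
  unfold issue; rw [min_comm, max_comm]

lemma issue_eq_of_lt {i j : Fin m} (h : i < j) :
    issue m i j = {atomF m i j, (atomF m i j)ᶜ} := by
  unfold issue; rw [min_eq_left h.le, max_eq_right h.le]

lemma prefF_mem_issue {i j : Fin m} (h : i ≠ j) : prefF m i j ∈ issue m i j := by
  unfold prefF
  rcases lt_or_gt_of_ne h with h' | h'
  · rw [if_pos h', issue_eq_of_lt h']; exact Finset.mem_insert_self _ _
  · rw [if_neg (not_lt.mpr h'.le), issue_comm, issue_eq_of_lt h']
    exact Finset.mem_insert_of_mem (Finset.mem_singleton_self _)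

lemma mem_prefAgenda {φ : Finset (Val m)} :
    φ ∈ prefAgenda m ↔ ∃ a b : Fin m, a < b ∧ (φ = atomF m a b ∨ φ = (atomF m a b)ᶜ) := by
  simp only [prefAgenda, Finset.mem_biUnion, Finset.mem_filter, Finset.mem_univ, true_and,
    Finset.mem_insert, Finset.mem_singleton, Prod.exists]

lemma issue_subset_agenda {i j : Fin m} (h : i ≠ j) : issue m i j ⊆ prefAgenda m := by
  have hlt : min i j < max i j := min_lt_max.mpr h
  unfold issue
  intro φ hφ
  rcases Finset.mem_insert.mp hφ with h' | h'
  · exact mem_prefAgenda.mpr ⟨_, _, hlt, Or.inl h'⟩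
  · exact mem_prefAgenda.mpr ⟨_, _, hlt, Or.inr (Finset.mem_singleton.mp h')⟩

lemma issue_subset {B : Finset (Finset (Val m))} (hB : IsAgenda B) {i j : Fin m}
    {ψ : Finset (Val m)} (hψ : ψ ∈ issue m i j) (hmem : ψ ∈ B) : issue m i j ⊆ B := by
  unfold issue at hψ ⊢
  have key : atomF m (min i j) (max i j) ∈ B ∧ (atomF m (min i j) (max i j))ᶜ ∈ B := by
    rcases Finset.mem_insert.mp hψ with h1 | h1
    · exact ⟨h1 ▸ hmem, hB.1 _ (h1 ▸ hmem)⟩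
    · rw [Finset.mem_singleton] at h1
      have hc : (atomF m (min i j) (max i j))ᶜ ∈ B := h1 ▸ hmem
      have := hB.1 _ hc
      rw [compl_compl] at this
      exact ⟨this, hc⟩
  intro φ hφ
  rcases Finset.mem_insert.mp hφ with h2 | h2
  · exact h2 ▸ key.1
  · rw [Finset.mem_singleton] at h2; exact h2 ▸ key.2

def valOf (m : ℕ) (r : Fin m → ℕ) : Val m := fun i j => decide (r i < r j)

lemma prefB_valOf {r : Fin m → ℕ} (hr : Function.Injective r) {i j : Fin m} (h : i ≠ j) :
    (prefB (valOf m r) i j = true) ↔ r i < r j := by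
  have hne : r i ≠ r j := fun e => h (hr e)
  unfold prefB valOf
  rcases lt_or_gt_of_ne h with h' | h'
  · rw [if_pos h']; simp
  · rw [if_neg (not_lt.mpr h'.le)]; simp; omega

lemma valOf_mem_ΓC {r : Fin m → ℕ} (hr : Function.Injective r) : valOf m r ∈ ΓC m := by
  unfold ΓC
  rw [Finset.mem_filter]
  refine ⟨Finset.mem_univ _, ?_⟩
  intro i j k hij hjk hik h1 h2
  rw [prefB_valOf hr hij] at h1
  rw [prefB_valOf hr hjk] at h2
  rw [prefB_valOf hr hik]
  omega

def rk1 (i j k : Fin m) : Fin m → ℕ :=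
  fun a => if a = i then 0 else if a = j then 1 else if a = k then 2 else a.val + 3

def rk2 (i j k : Fin m) : Fin m → ℕ :=
  fun a => if a = i then 2 else if a = j then 0 else if a = k then 1 else a.val + 3

lemma rk1_inj (i j k : Fin m) : Function.Injective (rk1 i j k) := by
  intro a b h
  unfold rk1 at h
  split_ifs at h <;> omega

lemma rk2_inj (i j k : Fin m) : Function.Injective (rk2 i j k) := by
  intro a b h
  unfold rk2 at h
  split_ifs at h <;> omega

lemma rk_agree {i j k : Fin m} (hij : i ≠ j) (hik : i ≠ k) (hjk : j ≠ k)
    {a b : Fin m}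
    (h1 : a = i → b ≠ j) (h2 : a = j → b ≠ i)
    (h3 : a = i → b ≠ k) (h4 : a = k → b ≠ i) :
    (rk1 i j k a < rk1 i j k b ↔ rk2 i j k a < rk2 i j k b) := by
  unfold rk1 rk2
  split_ifs <;> omega

set_option maxHeartbeats 1000000 in
lemma core (m : ℕ) (A1 A2 : Finset (Finset (Val m)))
    (hIOD : IOD (ΓC m) (prefAgenda m) A1 A2)
    (i j k : Fin m) (hij : i ≠ j) (hik : i ≠ k) (hjk : j ≠ k)
    (h1 : issue m i j ⊆ A1) (h2 : issue m i k ⊆ A2)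
    (hn2 : ¬ issue m i j ⊆ A2) (hn1 : ¬ issue m i k ⊆ A1) : False := by
  obtain ⟨hU, hA1, hA2, hglue⟩ := hIOD
  set v1 : Val m := valOf m (rk1 i j k) with hv1def
  set v2 : Val m := valOf m (rk2 i j k) with hv2def
  have hv1Γ : v1 ∈ ΓC m := valOf_mem_ΓC (rk1_inj i j k)
  have hv2Γ : v2 ∈ ΓC m := valOf_mem_ΓC (rk2_inj i j k)
  set J1 : Finset (Finset (Val m)) := A1.filter (fun φ => v1 ∈ φ) with hJ1def
  set J2 : Finset (Finset (Val m)) := A2.filter (fun φ => v2 ∈ φ) with hJ2def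
  have hJ1 : J1 ∈ CCJ (ΓC m) A1 := JS_mem_CCJ hA1 hv1Γ
  have hJ2 : J2 ∈ CCJ (ΓC m) A2 := JS_mem_CCJ hA2 hv2Γ
  -- agreement on the overlap
  have hagree : ∀ φ ∈ A1, φ ∈ A2 → (v1 ∈ φ ↔ v2 ∈ φ) := by
    intro φ hφ1 hφ2
    have hφA : φ ∈ prefAgenda m := by
      rw [← hU]; exact Finset.mem_union_left _ hφ1
    obtain ⟨a, b, hab, hform⟩ := mem_prefAgenda.mp hφA
    have hkey : v1 a b = v2 a b := by
      by_contra hne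
      have hor : (a = i ∧ b = j) ∨ (a = j ∧ b = i) ∨ (a = i ∧ b = k) ∨ (a = k ∧ b = i) := by
        by_contra hcon
        push_neg at hcon
        obtain ⟨c1, c2, c3, c4⟩ := hcon
        have := rk_agree hij hik hjk (a := a) (b := b) c1 c2 c3 c4
        rw [hv1def, hv2def] at hne
        unfold valOf at hne
        simp only [decide_eq_decide] at hne
        exact hne this
      have hφiss : ∀ c d : Fin m, min c d = a → max c d = b → φ ∈ issue m c d := by
        intro c d hc hd
        unfold issue
        rw [hc, hd]
        rcases hform with h | h
        · exact h ▸ Finset.mem_insert_self _ _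
        · exact h ▸ Finset.mem_insert_of_mem (Finset.mem_singleton_self _)
      rcases hor with ⟨ha, hb⟩ | ⟨ha, hb⟩ | ⟨ha, hb⟩ | ⟨ha, hb⟩
      · have e1 : min i j = a := by rw [← ha, ← hb]; exact min_eq_left hab.le
        have e2 : max i j = b := by rw [← ha, ← hb]; exact max_eq_right hab.le
        exact hn2 (issue_subset hA2 (hφiss i j e1 e2) hφ2)
      · have e1 : min i j = a := by rw [← ha, ← hb]; exact min_eq_right hab.le
        have e2 : max i j = b := by rw [← ha, ← hb]; exact max_eq_left hab.le
        exact hn2 (issue_subset hA2 (hφiss i j e1 e2) hφ2)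
      · have e1 : min i k = a := by rw [← ha, ← hb]; exact min_eq_left hab.le
        have e2 : max i k = b := by rw [← ha, ← hb]; exact max_eq_right hab.le
        exact hn1 (issue_subset hA1 (hφiss i k e1 e2) hφ1)
      · have e1 : min i k = a := by rw [← ha, ← hb]; exact min_eq_right hab.le
        have e2 : max i k = b := by rw [← ha, ← hb]; exact max_eq_left hab.le
        exact hn1 (issue_subset hA1 (hφiss i k e1 e2) hφ1)
    rcases hform with h | h <;> subst h
    · rw [mem_atomF, mem_atomF, hkey]
    · rw [mem_atomF_compl, mem_atomF_compl, hkey]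
  have hOv : J1 ∩ A2 = J2 ∩ A1 := by
    ext φ
    simp only [hJ1def, hJ2def, Finset.mem_inter, Finset.mem_filter]
    constructor
    · rintro ⟨⟨hφ1, hv⟩, hφ2⟩
      exact ⟨⟨hφ2, (hagree φ hφ1 hφ2).mp hv⟩, hφ1⟩
    · rintro ⟨⟨hφ2, hv⟩, hφ1⟩
      exact ⟨⟨hφ1, (hagree φ hφ1 hφ2).mpr hv⟩, hφ2⟩
  obtain ⟨v, hvΓ, hvall⟩ := (hglue J1 hJ1 J2 hJ2 hOv).2.2
  -- the three key formulas
  have hPij : prefF m i j ∈ J1 := by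
    refine Finset.mem_filter.mpr ⟨h1 (prefF_mem_issue hij), ?_⟩
    rw [mem_prefF hij, hv1def, prefB_valOf (rk1_inj i j k) hij]
    unfold rk1; simp [hij.symm]
  have hPki : prefF m k i ∈ J2 := by
    have hmem : prefF m k i ∈ issue m i k := issue_comm i k ▸ prefF_mem_issue (Ne.symm hik)
    refine Finset.mem_filter.mpr ⟨h2 hmem, ?_⟩
    rw [mem_prefF (Ne.symm hik), hv2def, prefB_valOf (rk2_inj i j k) (Ne.symm hik)]
    unfold rk2; simp [hik.symm, hjk.symm, hik]
  have hPjk : prefF m j k ∈ J1 ∪ J2 := by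
    have hmem : prefF m j k ∈ prefAgenda m := issue_subset_agenda hjk (prefF_mem_issue hjk)
    rw [← hU] at hmem
    have hs1 : v1 ∈ prefF m j k := by
      rw [mem_prefF hjk, hv1def, prefB_valOf (rk1_inj i j k) hjk]
      unfold rk1; simp [hij.symm, hik.symm, hjk, hjk.symm]
    have hs2 : v2 ∈ prefF m j k := by
      rw [mem_prefF hjk, hv2def, prefB_valOf (rk2_inj i j k) hjk]
      unfold rk2; simp [hij.symm, hik.symm, hjk, hjk.symm]
    rcases Finset.mem_union.mp hmem with h | h
    · exact Finset.mem_union_left _ (Finset.mem_filter.mpr ⟨h, hs1⟩)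
    · exact Finset.mem_union_right _ (Finset.mem_filter.mpr ⟨h, hs2⟩)
  have e1 : prefB v i j = true :=
    (mem_prefF hij).mp (hvall _ (Finset.mem_union_left _ hPij))
  have e2 : prefB v j k = true := (mem_prefF hjk).mp (hvall _ hPjk)
  have e3 : prefB v k i = true :=
    (mem_prefF (Ne.symm hik)).mp (hvall _ (Finset.mem_union_right _ hPki))
  have hT : ∀ a b c : Fin m, a ≠ b → b ≠ c → a ≠ c →
      prefB v a b = true → prefB v b c = true → prefB v a c = true := by
    have := hvΓ
    unfold ΓC at this
    exact (Finset.mem_filter.mp this).2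
  have e4 : prefB v i k = true := hT i j k hij hjk hik e1 e2
  rw [prefB_swap hik, e3] at e4
  simp at e4

end Pref
end JA

namespace JA
namespace Pref

/-- If `{A1, A2}` is an independent overlapping decomposition of the preference agenda
over `m ≥ 3` alternatives (with the transitivity constraint `Γ_C`), then for all pairwise
distinct alternatives `i`, `j`, `k`, the issue on `{x_i, x_j}` and the issue on
`{x_i, x_k}` are both contained in `A1` or both contained in `A2`. -/
theorem iod_issues_together (m : ℕ) (hm : 3 ≤ m)
    (A1 A2 : Finset (Finset (Val m)))
    (hIOD : IOD (ΓC m) (prefAgenda m) A1 A2) :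
    ∀ i j k : Fin m, i ≠ j → i ≠ k → j ≠ k →
      (issue m i j ⊆ A1 ∧ issue m i k ⊆ A1) ∨
      (issue m i j ⊆ A2 ∧ issue m i k ⊆ A2) := by
  intro i j k hij hik hjk
  have hU := hIOD.1
  have hA1 := hIOD.2.1
  have hA2 := hIOD.2.2.1
  have hatm : ∀ a b : Fin m, atomF m (min a b) (max a b) ∈ issue m a b := by
    intro a b
    unfold issue
    exact Finset.mem_insert_self _ _
  have hiss : ∀ a b : Fin m, a ≠ b → issue m a b ⊆ A1 ∨ issue m a b ⊆ A2 := by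
    intro a b hab
    have hmem : atomF m (min a b) (max a b) ∈ prefAgenda m :=
      issue_subset_agenda hab (hatm a b)
    rw [← hU] at hmem
    rcases Finset.mem_union.mp hmem with h | h
    · exact Or.inl (issue_subset hA1 (hatm a b) h)
    · exact Or.inr (issue_subset hA2 (hatm a b) h)
  rcases hiss i j hij with hij1 | hij2 <;> rcases hiss i k hik with hik1 | hik2
  · exact Or.inl ⟨hij1, hik1⟩
  · by_cases c1 : issue m i j ⊆ A2
    · exact Or.inr ⟨c1, hik2⟩
    by_cases c2 : issue m i k ⊆ A1
    · exact Or.inl ⟨hij1, c2⟩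
    exact (core m A1 A2 hIOD i j k hij hik hjk hij1 hik2 c1 c2).elim
  · by_cases c1 : issue m i j ⊆ A1
    · exact Or.inl ⟨c1, hik1⟩
    by_cases c2 : issue m i k ⊆ A2
    · exact Or.inr ⟨hij2, c2⟩
    exact (core m A2 A1 (IOD_symm hIOD) i j k hij hik hjk hij2 hik1 c1 c2).elim
  · exact Or.inr ⟨hij2, hik2⟩

end Pref
end JA
end
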